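/- arXiv:1411.6717 — 6 statements merged into one kernel-verified Lean document; each statement's English description precedes it below -/
import Mathlib

section
/- Let $K$ be a complete nonarchimedean valued field, $a \in \mathbb{Q}$, and let $0 \to V_1 \to V \to V_2 \to 0$ be a short exact sequence of $K$-vector spaces with an endomorphism $T$ of $V$ preserving $V_1$ (inducing endomorphisms of $V_1$ and $V_2$). If $V_1$ and $V_2$ both admit slope $\le a$ decompositions with respect to $T$, then so does $V$, and the sequences $0 \to V_{1,\le a} \to V_{\le a} \to V_{2,\le a} \to 0$ and $0 \to V_{1,>a} \to V_{>a} \to V_{2,>a} \to 0$ are exact. -/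
open Polynomial

variable (K : Type) [Field K]

/-- An additive valuation on the algebraic closure of `K`, nontrivial,
nonarchimedean, normalized with values in `ℚ` (together with `∞ = v 0`). -/
structure AlgClosureValuation where
  v : AlgebraicClosure K → WithTop ℚ
  v_eq_top_iff : ∀ x, v x = ⊤ ↔ x = 0
  v_mul : ∀ x y, v (x * y) = v x + v y
  v_add : ∀ x y, min (v x) (v y) ≤ v (x + y)
  nontrivial : ∃ x : AlgebraicClosure K, x ≠ 0 ∧ v x ≠ 0

/-- `K` is complete with respect to the restriction of the valuation:
every Cauchy sequence in `K` converges in `K`. -/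
def AlgClosureValuation.IsComplete (V : AlgClosureValuation K) : Prop :=
  ∀ x : ℕ → K,
    (∀ q : ℚ, ∃ N : ℕ, ∀ i ≥ N, ∀ j ≥ N,
        (q : WithTop ℚ) < V.v (algebraMap K (AlgebraicClosure K) (x i - x j))) →
    ∃ l : K, ∀ q : ℚ, ∃ N : ℕ, ∀ i ≥ N,
        (q : WithTop ℚ) < V.v (algebraMap K (AlgebraicClosure K) (x i - l))

/-- A polynomial `P ∈ K[X]` has slopes `≤ a` : `P ≠ 0` and every root of `P` in the
algebraic closure has valuation `≤ a`. -/
def SlopesLE (V : AlgClosureValuation K) (a : ℚ) (P : K[X]) : Prop :=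
  P ≠ 0 ∧ ∀ x : AlgebraicClosure K, Polynomial.aeval x P = 0 → V.v x ≤ (a : WithTop ℚ)

/-- A slope `≤ a` decomposition `W = W1 ⊕ W2` of a subspace `W` (with respect to an
endomorphism `T` preserving everything): `W1` and `W2` are `T`-invariant, `W1` is
finite dimensional and killed by some polynomial with slopes `≤ a`, and every
polynomial with slopes `≤ a` acts invertibly on `W2`. -/
def SlopeDecompOn (V : AlgClosureValuation K) (a : ℚ)
    (M : Type) [AddCommGroup M] [Module K M] (T : M →ₗ[K] M)
    (W W1 W2 : Submodule K M) : Prop :=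
  W1 ≤ W ∧ W2 ≤ W ∧ W1 ⊔ W2 = W ∧ W1 ⊓ W2 = ⊥ ∧
  W1.map T ≤ W1 ∧ W2.map T ≤ W2 ∧
  FiniteDimensional K W1 ∧
  (∃ P : K[X], SlopesLE K V a P ∧ ∀ x ∈ W1, Polynomial.aeval T P x = 0) ∧
  (∀ P : K[X], SlopesLE K V a P →
    Submodule.map (Polynomial.aeval T P) W2 = W2 ∧
    ∀ x ∈ W2, Polynomial.aeval T P x = 0 → x = 0)

section helpers

lemma aeval_pow_mem {M : Type} [AddCommGroup M] [Module K M] (T : M →ₗ[K] M)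
    (W : Submodule K M) (hW : ∀ x ∈ W, T x ∈ W) (n : ℕ) :
    ∀ x ∈ W, (T ^ n) x ∈ W := by
  induction n with
  | zero => intro x hx; simpa using hx
  | succ k ih =>
    intro x hx
    rw [pow_succ, Module.End.mul_apply]
    exact ih _ (hW x hx)

lemma aeval_mem {M : Type} [AddCommGroup M] [Module K M] (T : M →ₗ[K] M)
    (W : Submodule K M) (hW : ∀ x ∈ W, T x ∈ W) (P : K[X]) :
    ∀ x ∈ W, Polynomial.aeval T P x ∈ W := by
  induction P using Polynomial.induction_on' with
  | add p q hp hq => intro x hx; rw [map_add, LinearMap.add_apply]; exact W.add_mem (hp x hx) (hq x hx)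
  | monomial n c =>
    intro x hx
    rw [Polynomial.aeval_monomial, Module.End.mul_apply, Module.algebraMap_end_apply]
    exact W.smul_mem _ (aeval_pow_mem K T W hW n x hx)

lemma aeval_intertwine {M N : Type} [AddCommGroup M] [Module K M] [AddCommGroup N] [Module K N]
    (T : M →ₗ[K] M) (T' : N →ₗ[K] N) (f : M →ₗ[K] N) (hf : ∀ x, f (T x) = T' (f x))
    (P : K[X]) (x : M) : f (Polynomial.aeval T P x) = Polynomial.aeval T' P (f x) := by
  induction P using Polynomial.induction_on' generalizing x with
  | add p q hp hq => rw [map_add, map_add, LinearMap.add_apply, LinearMap.add_apply, map_add, hp, hq]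
  | monomial n c =>
    have hpow : ∀ m (y : M), f ((T ^ m) y) = (T' ^ m) (f y) := by
      intro m
      induction m with
      | zero => simp
      | succ k ih =>
        intro y
        rw [pow_succ, pow_succ, Module.End.mul_apply, Module.End.mul_apply, ih, hf]
    rw [Polynomial.aeval_monomial, Polynomial.aeval_monomial, Module.End.mul_apply,
      Module.End.mul_apply, Module.algebraMap_end_apply, Module.algebraMap_end_apply,
      map_smul, hpow]

lemma aeval_comm_apply {M : Type} [AddCommGroup M] [Module K M] (T : M →ₗ[K] M)
    (P Q : K[X]) (x : M) :
    Polynomial.aeval T P (Polynomial.aeval T Q x) = Polynomial.aeval T Q (Polynomial.aeval T P x) := by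
  have h : Polynomial.aeval T (Q * P) x = Polynomial.aeval T (P * Q) x := by rw [mul_comm]
  rw [map_mul, map_mul, Module.End.mul_apply, Module.End.mul_apply] at h
  exact h.symm

end helpers

lemma SlopesLE_mul (V : AlgClosureValuation K) (a : ℚ) {P Q : K[X]}
    (hP : SlopesLE K V a P) (hQ : SlopesLE K V a Q) : SlopesLE K V a (P * Q) := by
  refine ⟨mul_ne_zero hP.1 hQ.1, fun x hx => ?_⟩
  rw [map_mul, mul_eq_zero] at hx
  rcases hx with h | h
  · exact hP.2 x h
  · exact hQ.2 x h

/-- **Slope decompositions in short exact sequences.**  Given `0 → S → M → M/S → 0`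
with `T` an endomorphism of `M` preserving `S`, if `S` and `M/S` admit slope `≤ a`
decompositions then so does `M`, compatibly: the decomposition of `M` intersects to
that of `S` and maps onto that of `M/S`. -/
theorem slope_decomposition_extension
    (V : AlgClosureValuation K) (hV : V.IsComplete) (a : ℚ)
    (M : Type) [AddCommGroup M] [Module K M] (T : M →ₗ[K] M)
    (S : Submodule K M) (hS : S ≤ S.comap T)
    (S1 S2 : Submodule K M) (hSdec : SlopeDecompOn K V a M T S S1 S2)
    (Q1 Q2 : Submodule K (M ⧸ S))
    (hQdec : SlopeDecompOn K V a (M ⧸ S) (S.mapQ S T hS) ⊤ Q1 Q2) :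
    ∃ V1 V2 : Submodule K M,
      SlopeDecompOn K V a M T ⊤ V1 V2 ∧
      V1 ⊓ S = S1 ∧ V2 ⊓ S = S2 ∧
      V1.map S.mkQ = Q1 ∧ V2.map S.mkQ = Q2 := by
  classical
  obtain ⟨hS1S, hS2S, hSsup, hSinf, hS1T, hS2T, hS1fin, ⟨P1, hP1s, hP1k⟩, hS2inv⟩ := hSdec
  obtain ⟨-, -, hQsup, hQinf, hQ1T, hQ2T, hQ1fin, ⟨P2, hP2s, hP2k⟩, hQ2inv⟩ := hQdec
  set T' : (M ⧸ S) →ₗ[K] (M ⧸ S) := S.mapQ S T hS with hT'def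
  -- basic intertwining of T and T' through mkQ
  have hcompat : ∀ x : M, S.mkQ (T x) = T' (S.mkQ x) := by
    intro x
    rw [hT'def, Submodule.mkQ_apply, Submodule.mkQ_apply, Submodule.mapQ_apply]
  have hint : ∀ (P : K[X]) (x : M), S.mkQ (Polynomial.aeval T P x)
      = Polynomial.aeval T' P (S.mkQ x) :=
    fun P x => aeval_intertwine K T T' S.mkQ hcompat P x
  have hTcomm : ∀ (P : K[X]) (x : M), T (Polynomial.aeval T P x)
      = Polynomial.aeval T P (T x) :=
    fun P x => aeval_intertwine K T T T (fun _ => rfl) P x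
  -- membership invariances
  have hSmem : ∀ x ∈ S, T x ∈ S := fun x hx => Submodule.mem_comap.mp (hS hx)
  have hS1mem : ∀ x ∈ S1, T x ∈ S1 := fun x hx => hS1T ⟨x, hx, rfl⟩
  have hS2mem : ∀ x ∈ S2, T x ∈ S2 := fun x hx => hS2T ⟨x, hx, rfl⟩
  have hQ1mem : ∀ q ∈ Q1, T' q ∈ Q1 := fun q hq => hQ1T ⟨q, hq, rfl⟩
  have hQ2mem : ∀ q ∈ Q2, T' q ∈ Q2 := fun q hq => hQ2T ⟨q, hq, rfl⟩
  have hPS : ∀ (P : K[X]) (x : M), x ∈ S → Polynomial.aeval T P x ∈ S :=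
    fun P x hx => aeval_mem K T S hSmem P x hx
  have hPS1 : ∀ (P : K[X]) (x : M), x ∈ S1 → Polynomial.aeval T P x ∈ S1 :=
    fun P x hx => aeval_mem K T S1 hS1mem P x hx
  have hPS2 : ∀ (P : K[X]) (x : M), x ∈ S2 → Polynomial.aeval T P x ∈ S2 :=
    fun P x hx => aeval_mem K T S2 hS2mem P x hx
  -- kernel of mkQ
  have hker : ∀ x : M, S.mkQ x = 0 ↔ x ∈ S := by
    intro x
    rw [Submodule.mkQ_apply, Submodule.Quotient.mk_eq_zero]
  -- the polynomials
  set R : K[X] := P1 * P2 with hRdef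
  have hRs : SlopesLE K V a R := SlopesLE_mul K V a hP1s hP2s
  set F : K[X] := P1 * R with hFdef
  have hFs : SlopesLE K V a F := SlopesLE_mul K V a hP1s hRs
  -- the preimages
  set N1 : Submodule K M := Q1.comap S.mkQ with hN1def
  set N2 : Submodule K M := Q2.comap S.mkQ with hN2def
  have hSN1 : S ≤ N1 := by
    intro x hx
    rw [hN1def, Submodule.mem_comap, (hker x).mpr hx]
    exact Q1.zero_mem
  have hSN2 : S ≤ N2 := by
    intro x hx
    rw [hN2def, Submodule.mem_comap, (hker x).mpr hx]
    exact Q2.zero_mem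
  -- the candidate decomposition
  set V1 : Submodule K M := N1 ⊓ Submodule.comap (Polynomial.aeval T R) S1 with hV1def
  set V2 : Submodule K M := N2.map (Polynomial.aeval T F) with hV2def
  -- basic membership facts
  have hV1N1 : ∀ x ∈ V1, S.mkQ x ∈ Q1 := by
    intro x hx
    exact Submodule.mem_comap.mp (Submodule.mem_inf.mp hx).1
  have hV1R : ∀ x ∈ V1, Polynomial.aeval T R x ∈ S1 := by
    intro x hx
    exact Submodule.mem_comap.mp (Submodule.mem_inf.mp hx).2
  have hV2Q2 : ∀ x ∈ V2, S.mkQ x ∈ Q2 := by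
    intro x hx
    obtain ⟨y, hy, rfl⟩ := Submodule.mem_map.mp hx
    rw [hint]
    exact aeval_mem K T' Q2 hQ2mem F _ (Submodule.mem_comap.mp hy)
  -- R maps N1 into S
  have hRN1S : ∀ x ∈ N1, Polynomial.aeval T R x ∈ S := by
    intro x hx
    have h2 : Polynomial.aeval T P2 x ∈ S := by
      rw [← hker, hint]
      exact hP2k _ (Submodule.mem_comap.mp hx)
    rw [hRdef, map_mul, Module.End.mul_apply]
    exact hPS P1 _ h2
  -- F kills S
  have hFS1 : ∀ x ∈ S1, Polynomial.aeval T F x = 0 := by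
    intro x hx
    rw [hFdef, map_mul, Module.End.mul_apply]
    exact hP1k _ (hPS1 R x hx)
  -- S2 ≤ V2
  have hS2V2 : S2 ≤ V2 := by
    rw [hV2def, ← (hS2inv F hFs).1]
    exact Submodule.map_mono (le_trans hS2S hSN2)
  -- V1 ⊓ S = S1
  have hV1S : V1 ⊓ S = S1 := by
    apply le_antisymm
    · rintro x hx
      obtain ⟨hxV1, hxS⟩ := Submodule.mem_inf.mp hx
      have hxsup : x ∈ S1 ⊔ S2 := hSsup.symm ▸ hxS
      obtain ⟨s1, hs1, s2, hs2, rfl⟩ := Submodule.mem_sup.mp hxsup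
      have hr : Polynomial.aeval T R (s1 + s2) ∈ S1 := hV1R _ hxV1
      rw [map_add] at hr
      have h2 : Polynomial.aeval T R s2 ∈ S1 := by
        have := S1.sub_mem hr (hPS1 R s1 hs1)
        simpa using this
      have h0 : Polynomial.aeval T R s2 ∈ S1 ⊓ S2 :=
        Submodule.mem_inf.mpr ⟨h2, hPS2 R s2 hs2⟩
      rw [hSinf, Submodule.mem_bot] at h0
      have : s2 = 0 := (hS2inv R hRs).2 s2 hs2 h0
      rw [this, add_zero]
      exact hs1
    · intro x hx
      refine Submodule.mem_inf.mpr ⟨Submodule.mem_inf.mpr ⟨hSN1 (hS1S hx), ?_⟩, hS1S hx⟩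
      exact Submodule.mem_comap.mpr (hPS1 R x hx)
  -- V2 ⊓ S = S2
  have hV2S : V2 ⊓ S = S2 := by
    apply le_antisymm
    · rintro x hx
      obtain ⟨hxV2, hxS⟩ := Submodule.mem_inf.mp hx
      obtain ⟨y, hyN2, rfl⟩ := Submodule.mem_map.mp hxV2
      have hq0 : Polynomial.aeval T' F (S.mkQ y) = 0 := by
        rw [← hint, hker]
        exact hxS
      have hy0 : S.mkQ y = 0 := (hQ2inv F hFs).2 _ (Submodule.mem_comap.mp hyN2) hq0
      have hyS : y ∈ S := (hker y).mp hy0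
      have hysup : y ∈ S1 ⊔ S2 := hSsup.symm ▸ hyS
      obtain ⟨s1, hs1, s2, hs2, rfl⟩ := Submodule.mem_sup.mp hysup
      rw [map_add, hFS1 s1 hs1, zero_add]
      exact hPS2 F s2 hs2
    · intro x hx
      exact Submodule.mem_inf.mpr ⟨hS2V2 hx, hS2S hx⟩
  -- The key decomposition of elements of N1
  have hN1decomp : ∀ n ∈ N1, ∃ t ∈ S2, n - t ∈ V1 := by
    intro n hn
    have hRn : Polynomial.aeval T R n ∈ S := hRN1S n hn
    have hrsup : Polynomial.aeval T R n ∈ S1 ⊔ S2 := hSsup.symm ▸ hRn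
    obtain ⟨s1, hs1, s2, hs2, hsum⟩ := Submodule.mem_sup.mp hrsup
    have hs2' : s2 ∈ S2.map (Polynomial.aeval T R) := ((hS2inv R hRs).1).symm ▸ hs2
    obtain ⟨t, htS2, htR⟩ := Submodule.mem_map.mp hs2'
    refine ⟨t, htS2, Submodule.mem_inf.mpr ⟨?_, ?_⟩⟩
    · exact N1.sub_mem hn (hSN1 (hS2S htS2))
    · rw [Submodule.mem_comap, map_sub, htR, ← hsum]
      simpa using hs1
  -- V1 maps onto Q1
  have hmapQ1 : V1.map S.mkQ = Q1 := by
    apply le_antisymm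
    · exact Submodule.map_le_iff_le_comap.mpr inf_le_left
    · intro q hq
      obtain ⟨x, rfl⟩ := Submodule.mkQ_surjective S q
      have hxN1 : x ∈ N1 := Submodule.mem_comap.mpr hq
      obtain ⟨t, htS2, htV1⟩ := hN1decomp x hxN1
      refine Submodule.mem_map.mpr ⟨x - t, htV1, ?_⟩
      rw [map_sub, (hker t).mpr (hS2S htS2), sub_zero]
  -- V2 maps onto Q2
  have hcompL : ∀ (P : K[X]),
      S.mkQ ∘ₗ (Polynomial.aeval T P : M →ₗ[K] M) = (Polynomial.aeval T' P) ∘ₗ S.mkQ :=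
    fun P => LinearMap.ext (hint P)
  have hN2map : N2.map S.mkQ = Q2 :=
    Submodule.map_comap_eq_of_surjective (Submodule.mkQ_surjective S) Q2
  have hmapQ2 : V2.map S.mkQ = Q2 := by
    rw [hV2def, ← Submodule.map_comp, hcompL F, Submodule.map_comp, hN2map, (hQ2inv F hFs).1]
  -- F kills V1
  have hFkill : ∀ x ∈ V1, Polynomial.aeval T F x = 0 := by
    intro x hx
    rw [hFdef, map_mul, Module.End.mul_apply]
    exact hP1k _ (hV1R x hx)
  -- T-invariance of V1
  have hV1T : V1.map T ≤ V1 := by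
    rintro _ ⟨x, hx, rfl⟩
    refine Submodule.mem_inf.mpr ⟨Submodule.mem_comap.mpr ?_, Submodule.mem_comap.mpr ?_⟩
    · rw [hcompat]
      exact hQ1mem _ (hV1N1 x hx)
    · rw [← hTcomm]
      exact hS1mem _ (hV1R x hx)
  -- T-invariance of V2
  have hV2T : V2.map T ≤ V2 := by
    rintro _ ⟨x, hx, rfl⟩
    obtain ⟨y, hyN2, rfl⟩ := Submodule.mem_map.mp hx
    refine Submodule.mem_map.mpr ⟨T y, ?_, (hTcomm F y).symm⟩
    refine Submodule.mem_comap.mpr ?_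
    rw [hcompat]
    exact hQ2mem _ (Submodule.mem_comap.mp hyN2)
  -- every slopes ≤ a polynomial acts invertibly on V2
  have hPV2 : ∀ (P : K[X]), SlopesLE K V a P → ∀ x ∈ V2, Polynomial.aeval T P x ∈ V2 := by
    intro P hP x hx
    obtain ⟨y, hyN2, rfl⟩ := Submodule.mem_map.mp hx
    refine Submodule.mem_map.mpr ⟨Polynomial.aeval T P y, ?_, aeval_comm_apply K T F P y⟩
    refine Submodule.mem_comap.mpr ?_
    rw [hint]
    have : Polynomial.aeval T' P (S.mkQ y) ∈ Q2.map (Polynomial.aeval T' P) :=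
      Submodule.mem_map.mpr ⟨S.mkQ y, Submodule.mem_comap.mp hyN2, rfl⟩
    rwa [(hQ2inv P hP).1] at this
  have hV2inv : ∀ P : K[X], SlopesLE K V a P →
      Submodule.map (Polynomial.aeval T P) V2 = V2 ∧
      ∀ x ∈ V2, Polynomial.aeval T P x = 0 → x = 0 := by
    intro P hP
    constructor
    · apply le_antisymm
      · rintro _ ⟨x, hx, rfl⟩
        exact hPV2 P hP x hx
      · intro y hy
        have hyQ2 : S.mkQ y ∈ Q2 := hV2Q2 y hy
        have : S.mkQ y ∈ Q2.map (Polynomial.aeval T' P) := ((hQ2inv P hP).1).symm ▸ hyQ2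
        obtain ⟨q, hqQ2, hq⟩ := Submodule.mem_map.mp this
        have : q ∈ V2.map S.mkQ := hmapQ2.symm ▸ hqQ2
        obtain ⟨z, hzV2, hzq⟩ := Submodule.mem_map.mp this
        have hd : y - Polynomial.aeval T P z ∈ V2 ⊓ S := by
          refine Submodule.mem_inf.mpr ⟨V2.sub_mem hy (hPV2 P hP z hzV2), ?_⟩
          rw [← hker, map_sub, hint, hzq, hq, sub_self]
        rw [hV2S] at hd
        have : y - Polynomial.aeval T P z ∈ S2.map (Polynomial.aeval T P) :=
          ((hS2inv P hP).1).symm ▸ hd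
        obtain ⟨w, hwS2, hw⟩ := Submodule.mem_map.mp this
        refine Submodule.mem_map.mpr ⟨z + w, V2.add_mem hzV2 (hS2V2 hwS2), ?_⟩
        rw [map_add, hw]
        abel
    · intro x hxV2 hx0
      have hq0 : Polynomial.aeval T' P (S.mkQ x) = 0 := by
        rw [← hint, hx0, map_zero]
      have hxq : S.mkQ x = 0 := (hQ2inv P hP).2 _ (hV2Q2 x hxV2) hq0
      have hxS2 : x ∈ S2 := hV2S ▸ Submodule.mem_inf.mpr ⟨hxV2, (hker x).mp hxq⟩
      exact (hS2inv P hP).2 x hxS2 hx0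
  -- V1 ⊔ V2 = ⊤
  have hsup : V1 ⊔ V2 = ⊤ := by
    rw [eq_top_iff]
    intro x _
    have hxq : S.mkQ x ∈ Q1 ⊔ Q2 := hQsup.symm ▸ Submodule.mem_top
    obtain ⟨q1, hq1, q2, hq2, hsum⟩ := Submodule.mem_sup.mp hxq
    have : q2 ∈ Q2.map (Polynomial.aeval T' F) := ((hQ2inv F hFs).1).symm ▸ hq2
    obtain ⟨r, hrQ2, hrF⟩ := Submodule.mem_map.mp this
    obtain ⟨y, rfl⟩ := Submodule.mkQ_surjective S r
    have hyN2 : y ∈ N2 := Submodule.mem_comap.mpr hrQ2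
    have hv2 : Polynomial.aeval T F y ∈ V2 := Submodule.mem_map.mpr ⟨y, hyN2, rfl⟩
    have hv2q : S.mkQ (Polynomial.aeval T F y) = q2 := by rw [hint]; exact hrF
    have hnN1 : x - Polynomial.aeval T F y ∈ N1 := by
      refine Submodule.mem_comap.mpr ?_
      rw [map_sub, hv2q, ← hsum]
      simpa using hq1
    obtain ⟨t, htS2, htV1⟩ := hN1decomp _ hnN1
    refine Submodule.mem_sup.mpr ⟨x - Polynomial.aeval T F y - t, htV1,
      t + Polynomial.aeval T F y, V2.add_mem (hS2V2 htS2) hv2, ?_⟩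
    abel
  -- V1 ⊓ V2 = ⊥
  have hinf : V1 ⊓ V2 = ⊥ := by
    rw [eq_bot_iff]
    intro x hx
    obtain ⟨hx1, hx2⟩ := Submodule.mem_inf.mp hx
    have hq : S.mkQ x ∈ Q1 ⊓ Q2 := Submodule.mem_inf.mpr ⟨hV1N1 x hx1, hV2Q2 x hx2⟩
    rw [hQinf, Submodule.mem_bot] at hq
    have hxS : x ∈ S := (hker x).mp hq
    have h1 : x ∈ S1 := hV1S ▸ Submodule.mem_inf.mpr ⟨hx1, hxS⟩
    have h2 : x ∈ S2 := hV2S ▸ Submodule.mem_inf.mpr ⟨hx2, hxS⟩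
    have : x ∈ S1 ⊓ S2 := Submodule.mem_inf.mpr ⟨h1, h2⟩
    rwa [hSinf] at this
  -- finite dimensionality of V1
  have hV1fd : FiniteDimensional K V1 := by
    refine Module.Finite.iff_fg.mpr (Submodule.fg_of_fg_map_of_fg_inf_ker S.mkQ ?_ ?_)
    · rw [hmapQ1]
      exact Module.Finite.iff_fg.mp hQ1fin
    · rw [Submodule.ker_mkQ, hV1S]
      exact Module.Finite.iff_fg.mp hS1fin
  exact ⟨V1, V2, ⟨le_top, le_top, hsup, hinf, hV1T, hV2T, hV1fd, ⟨F, hFs, hFkill⟩, hV2inv⟩,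
    hV1S, hV2S, hmapQ1, hmapQ2⟩
end

section
/- Let $K$ be a complete nonarchimedean valued field with $\mathbb{Q}$-valued valuation, $a \in \mathbb{Q}$, and let $V_1 \subseteq V_2 \subseteq \cdots \subseteq V_\infty$ be an increasing chain of $K$-vector spaces with $V_\infty = \bigcup_i V_i$. Let $T$ be an endomorphism of $V_\infty$ with $T(V_i) \subseteq V_{i-1}$ for all $i > 1$. If each $V_i$ admits a slope $\le a$ decomposition for $T|_{V_i}$, then $V_{i,\le a}$ is independent of $i$, and $V_\infty$ admits a slope $\le a$ decomposition for $T$ with $V_{\infty,\le a} = V_{i,\le a}$ for any $i$ and $V_{\infty,>a} = \bigcup_i V_{i,>a}$. -/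
open Polynomial

variable (K : Type) [Field K]

/-!
A polynomial with slopes `≤ a` has nonzero constant term, so `T` maps each `V_{i,≤a}` onto
itself; since `T` lowers the index of the filtration, `V_{i,≤a} = T^{i-1} V_{i,≤a} ⊆ V_1`. An
element of `V_i` killed by a polynomial with slopes `≤ a` lies in `V_{i,≤a}`, which forces all
`V_{i,≤a}` to coincide. The parts `V_{i,>a}` then increase with `i`, and the decomposition of
`V_∞` is the union of the decompositions of the `V_i`.
-/

section

variable {K}

section

variable {M : Type} [AddCommGroup M] [Module K M] {T : M →ₗ[K] M}

lemma Submodule.aeval_mem_of_map_le {N : Submodule K M} (hN : N.map T ≤ N) (P : K[X])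
    {x : M} (hx : x ∈ N) : aeval T P x ∈ N :=
  aeval_apply_smul_mem_of_le_comap hx P T (Submodule.map_le_iff_le_comap.mp hN)

lemma Submodule.le_map_of_aeval_eq_zero {N : Submodule K M} (hN : N.map T ≤ N) {P : K[X]}
    (hP : P.coeff 0 ≠ 0) (hkill : ∀ x ∈ N, aeval T P x = 0) : N ≤ N.map T := by
  intro x hx
  refine ⟨-(P.coeff 0)⁻¹ • aeval T P.divX x, N.smul_mem _ (N.aeval_mem_of_map_le hN _ hx), ?_⟩
  have hsplit : T (aeval T P.divX x) + P.coeff 0 • x = 0 := by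
    have h := hkill x hx
    rwa [← X_mul_divX_add P, map_add, map_mul, aeval_X, aeval_C, LinearMap.add_apply,
      Module.End.mul_apply, Module.algebraMap_end_apply] at h
  rw [map_smul, eq_neg_of_add_eq_zero_left hsplit, smul_neg, neg_smul, neg_neg, smul_smul,
    inv_mul_cancel₀ hP, one_smul]

lemma Submodule.le_zero_of_le_map_self {N : Submodule K M} (hN : N ≤ N.map T)
    {W : ℕ → Submodule K M} (hT : ∀ i, (W (i + 1)).map T ≤ W i) : ∀ n, N ≤ W n → N ≤ W 0
  | 0, h => h
  | n + 1, h => le_zero_of_le_map_self hN hT n <| hN.trans <| (map_mono h).trans (hT n)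

end

lemma SlopesLE.coeff_zero_ne_zero {V : AlgClosureValuation K} {a : ℚ} {P : K[X]}
    (hP : SlopesLE K V a P) : P.coeff 0 ≠ 0 := by
  intro h
  have hv := hP.2 0 (by rw [aeval_def, eval₂_at_zero, h, map_zero])
  rw [(V.v_eq_top_iff 0).2 rfl] at hv
  exact WithTop.coe_ne_top (top_le_iff.mp hv)

namespace SlopeDecompOn

variable {V : AlgClosureValuation K} {a : ℚ} {M : Type} [AddCommGroup M] [Module K M]
  {T : M →ₗ[K] M} {W A B : Submodule K M}

lemma mem_left_of_aeval_eq_zero (h : SlopeDecompOn K V a M T W A B) {P : K[X]}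
    (hP : SlopesLE K V a P) {x : M} (hx : x ∈ W) (hkill : aeval T P x = 0) : x ∈ A := by
  obtain ⟨-, -, hsup, hinf, hAT, hBT, -, -, hinv⟩ := h
  rw [← hsup] at hx
  obtain ⟨y, hy, z, hz, rfl⟩ := Submodule.mem_sup.mp hx
  rw [map_add] at hkill
  have hPz : aeval T P z ∈ A ⊓ B :=
    ⟨eq_neg_of_add_eq_zero_right hkill ▸ A.neg_mem (A.aeval_mem_of_map_le hAT P hy),
      B.aeval_mem_of_map_le hBT P hz⟩
  rw [hinf, Submodule.mem_bot] at hPz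
  rw [(hinv P hP).2 z hz hPz, add_zero]
  exact hy

lemma left_le_map_left (h : SlopeDecompOn K V a M T W A B) : A ≤ A.map T := by
  obtain ⟨-, -, -, -, hAT, -, -, ⟨P, hP, hkill⟩, -⟩ := h
  exact A.le_map_of_aeval_eq_zero hAT hP.coeff_zero_ne_zero hkill

lemma left_le_of_le {W' A' B' : Submodule K M} (h : SlopeDecompOn K V a M T W A B)
    (h' : SlopeDecompOn K V a M T W' A' B') (hA' : A' ≤ W) : A' ≤ A := by
  obtain ⟨-, -, -, -, -, -, -, ⟨P, hP, hkill⟩, -⟩ := h'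
  exact fun x hx => h.mem_left_of_aeval_eq_zero hP (hA' hx) (hkill x hx)

/-- `B = P(T) B ⊆ P(T) W' = P(T) B' ⊆ B'` for any `P` with slopes `≤ a` killing `A'`. -/
lemma right_mono {W' A' B' : Submodule K M} (h : SlopeDecompOn K V a M T W A B)
    (h' : SlopeDecompOn K V a M T W' A' B') (hW : W ≤ W') : B ≤ B' := by
  obtain ⟨-, -, hsup', -, -, hBT', -, ⟨P, hP, hkill⟩, -⟩ := h'
  obtain ⟨-, hBW, -, -, -, -, -, -, hinv⟩ := h
  rw [← (hinv P hP).1]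
  rintro _ ⟨x, hx, rfl⟩
  have hx' : x ∈ A' ⊔ B' := hsup' ▸ hW (hBW hx)
  obtain ⟨y, hy, z, hz, rfl⟩ := Submodule.mem_sup.mp hx'
  rw [map_add, hkill y hy, zero_add]
  exact B'.aeval_mem_of_map_le hBT' P hz

lemma iSup {ι : Type*} [Nonempty ι] {W B : ι → Submodule K M}
    (h : ∀ i, SlopeDecompOn K V a M T (W i) A (B i)) (hB : Directed (· ≤ ·) B) :
    SlopeDecompOn K V a M T (⨆ i, W i) A (⨆ i, B i) := by
  obtain ⟨i₀⟩ := ‹Nonempty ι›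
  obtain ⟨hAW, -, -, -, hAT, -, hfin, hkill, -⟩ := h i₀
  simp only [SlopeDecompOn, forall_and] at h
  obtain ⟨-, hBW, hsup, hinf, -, hBT, -, -, hmap, hinj⟩ := h
  have hmem (x : M) : x ∈ ⨆ i, B i ↔ ∃ i, x ∈ B i := Submodule.mem_iSup_of_directed B hB
  refine ⟨hAW.trans (le_iSup W i₀), iSup_mono hBW, ?_, ?_, hAT, ?_, hfin, hkill,
    fun P hP => ⟨?_, fun x hx hx0 => ?_⟩⟩
  · refine le_antisymm (sup_le (hAW.trans (le_iSup W i₀)) (iSup_mono hBW)) (iSup_le fun i => ?_)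
    rw [← hsup i]
    exact sup_le_sup_left (le_iSup B i) A
  · refine eq_bot_iff.mpr fun x ⟨hxA, hxB⟩ => ?_
    obtain ⟨i, hxi⟩ := (hmem x).mp hxB
    exact hinf i ▸ ⟨hxA, hxi⟩
  · rw [Submodule.map_iSup]
    exact iSup_mono hBT
  · rw [Submodule.map_iSup]
    exact iSup_congr fun i => hmap i P hP
  · obtain ⟨i, hxi⟩ := (hmem x).mp hx
    exact hinj i P hP x hxi hx0

end SlopeDecompOn

end

theorem slope_decomposition_union
    (V : AlgClosureValuation K) (a : ℚ)
    (M : Type) [AddCommGroup M] [Module K M] (T : M →ₗ[K] M)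
    (W : ℕ → Submodule K M) (hmono : Monotone W) (hunion : (⨆ i, W i) = ⊤)
    (hT : ∀ i, (W (i + 1)).map T ≤ W i)
    (A B : ℕ → Submodule K M)
    (hdec : ∀ i, SlopeDecompOn K V a M T (W i) (A i) (B i)) :
    (∀ i j, A i = A j) ∧ SlopeDecompOn K V a M T ⊤ (A 0) (⨆ i, B i) := by
  have hA_le (i : ℕ) : A i ≤ W 0 :=
    Submodule.le_zero_of_le_map_self (hdec i).left_le_map_left hT i (hdec i).1
  have hA (i : ℕ) : A i = A 0 :=
    le_antisymm ((hdec 0).left_le_of_le (hdec i) (hA_le i))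
      ((hdec i).left_le_of_le (hdec 0) ((hdec 0).1.trans (hmono (Nat.zero_le i))))
  have hB : Monotone B := fun i j hij => (hdec i).right_mono (hdec j) (hmono hij)
  refine ⟨fun i j => (hA i).trans (hA j).symm, hunion ▸ ?_⟩
  exact SlopeDecompOn.iSup (fun i => hA i ▸ hdec i) hB.directed_le
end

section
/- Let $k$ be an algebraically closed field of characteristic $0$, let $d \ge 1$, and let $\mathrm{Pol}_{2d}$ denote the affine space of monic polynomials of degree $2d$ over $k$. Let $M$ be a finite index set. Then the subset $X \subseteq k^\times \times \mathrm{Pol}_{2d}(k)^M$ consisting of tuples $(t, (P_m)_{m \in M})$ for which there exist two multisets $\Sigma^1, \Sigma^2$ of $d$ elements of $k$ such that for every $m \in M$ the multiset of roots of $P_m$ equals $\Sigma^1 \sqcup \Sigma^2 t^m$, is Zariski closed in $k^\times \times \mathrm{Pol}_{2d}(k)^M$. -/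
open Polynomial
namespace SRL
variable (k : Type) [Field k] (d : ℕ) (M : Finset ℤ)
abbrev Iv := Unit ⊕ (↥M × Fin (2*d))
abbrev Kv := Iv d M ⊕ Unit
abbrev Nv := Kv d M ⊕ (Fin d ⊕ Fin d)
abbrev B := MvPolynomial (Iv d M) k
abbrev B' := MvPolynomial (Kv d M) k
abbrev R := MvPolynomial (Nv d M) k
noncomputable def vt : R k d M := MvPolynomial.X (Sum.inl (Sum.inl (Sum.inl ())))
noncomputable def vu : R k d M := MvPolynomial.X (Sum.inl (Sum.inr ()))
noncomputable def vc (m : ↥M) (i : Fin (2*d)) : R k d M :=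
  MvPolynomial.X (Sum.inl (Sum.inl (Sum.inr (m,i))))
noncomputable def vs (i : Fin d) : R k d M := MvPolynomial.X (Sum.inr (Sum.inl i))
noncomputable def vτ (i : Fin d) : R k d M := MvPolynomial.X (Sum.inr (Sum.inr i))
noncomputable def wt : B' k d M := MvPolynomial.X (Sum.inl (Sum.inl ()))
noncomputable def wu : B' k d M := MvPolynomial.X (Sum.inr ())
noncomputable def TpowB (m : ℤ) : B' k d M :=
  if 0 ≤ m then (wt k d M)^m.toNat else (wu k d M)^(-m).toNat
noncomputable def incl : B' k d M →+* R k d M := (MvPolynomial.rename Sum.inl).toRingHom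
noncomputable def inclB : B k d M →+* B' k d M := (MvPolynomial.rename Sum.inl).toRingHom
noncomputable def Tpow (m : ℤ) : R k d M := incl k d M (TpowB k d M m)
lemma incl_wt : incl k d M (wt k d M) = vt k d M := by simp [incl, wt, vt]
lemma incl_wu : incl k d M (wu k d M) = vu k d M := by simp [incl, wu, vu]
noncomputable def Qpoly (m : ↥M) : Polynomial (R k d M) :=
  (X ^ (2*d) + ∑ i : Fin (2*d), C (vc k d M m i) * X ^ (i:ℕ)) -
    (∏ i : Fin d, (X - C (vs k d M i))) *
      ∏ i : Fin d, (X - C (vτ k d M i * Tpow k d M m))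
noncomputable def Jdl : Ideal (R k d M) :=
  Ideal.span ({vu k d M * vt k d M - 1} ∪
    Set.range (fun p : ↥M × ℕ => (Qpoly k d M p.1).coeff p.2))
lemma ut_mem : vu k d M * vt k d M - 1 ∈ Jdl k d M := Ideal.subset_span (Or.inl rfl)
lemma coeff_mem (m : ↥M) (n : ℕ) : (Qpoly k d M m).coeff n ∈ Jdl k d M :=
  Ideal.subset_span (Or.inr ⟨(m,n), rfl⟩)

-- evaluation of TpowB
lemma eval_TpowB (y : Kv d M → k) (v : kˣ) (ht : y (Sum.inl (Sum.inl ())) = v)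
    (hu : y (Sum.inr ()) = ((v⁻¹ : kˣ) : k)) (m : ℤ) :
    MvPolynomial.eval y (TpowB k d M m) = ((v ^ m : kˣ) : k) := by
  by_cases h : 0 ≤ m
  · rw [TpowB, if_pos h]
    rw [map_pow, wt, MvPolynomial.eval_X, ht]
    rw [show (v:k)^m.toNat = ((v ^ (m.toNat:ℤ) : kˣ) : k) by
      rw [zpow_natCast]; exact (Units.val_pow_eq_pow_val v m.toNat).symm]
    rw [Int.toNat_of_nonneg h]
  · rw [TpowB, if_neg h]
    rw [map_pow, wu, MvPolynomial.eval_X, hu]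
    have : v ^ m = (v⁻¹) ^ (-m).toNat := by
      rw [inv_pow, ← zpow_natCast, Int.toNat_of_nonneg (by omega), ← zpow_neg, neg_neg]
    rw [this, Units.val_pow_eq_pow_val]

lemma map_Qpoly (y : Nv d M → k) (m : ↥M) :
    (Qpoly k d M m).map (MvPolynomial.eval y) =
      (X ^ (2*d) + ∑ i : Fin (2*d), C (y (Sum.inl (Sum.inl (Sum.inr (m,i))))) * X ^ (i:ℕ)) -
        (∏ i : Fin d, (X - C (y (Sum.inr (Sum.inl i))))) *
          ∏ i : Fin d, (X - C (y (Sum.inr (Sum.inr i)) *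
            MvPolynomial.eval y (Tpow k d M m))) := by
  simp [Qpoly, Polynomial.map_sub, Polynomial.map_add, Polynomial.map_pow,
    Polynomial.map_mul, Polynomial.map_sum, Polynomial.map_prod, Polynomial.map_X,
    Polynomial.map_C, vc, vs, vτ]

lemma eval_Jdl (y : Nv d M → k) (h1 : MvPolynomial.eval y (vu k d M * vt k d M - 1) = 0)
    (h2 : ∀ (m : ↥M) (n : ℕ), MvPolynomial.eval y ((Qpoly k d M m).coeff n) = 0) :
    ∀ f ∈ Jdl k d M, MvPolynomial.eval y f = 0 := by
  intro f hf
  have : Jdl k d M ≤ RingHom.ker (MvPolynomial.eval y) := by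
    rw [Jdl, Ideal.span_le]
    rintro g (rfl | ⟨⟨m,n⟩, rfl⟩)
    · exact h1
    · exact h2 m n
  exact this hf

-- clearing denominators
lemma select (f : B' k d M) : ∃ (n : ℕ) (g : B k d M),
    (wt k d M)^n * f - inclB k d M g ∈ Ideal.span {wu k d M * wt k d M - 1} := by
  induction f using MvPolynomial.induction_on with
  | C c =>
      exact ⟨0, MvPolynomial.C c, by simp [inclB]⟩
  | add p q hp hq =>
      obtain ⟨n1, g1, h1⟩ := hp
      obtain ⟨n2, g2, h2⟩ := hq
      refine ⟨n1 + n2, (MvPolynomial.X (Sum.inl ()))^n2 * g1 +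
        (MvPolynomial.X (Sum.inl ()))^n1 * g2, ?_⟩
      have hb : inclB k d M ((MvPolynomial.X (Sum.inl ()))^n2 * g1 +
          (MvPolynomial.X (Sum.inl ()))^n1 * g2) =
          (wt k d M)^n2 * inclB k d M g1 + (wt k d M)^n1 * inclB k d M g2 := by
        simp [inclB, wt]
      rw [hb, show (wt k d M)^(n1+n2) * (p + q) -
          ((wt k d M)^n2 * inclB k d M g1 + (wt k d M)^n1 * inclB k d M g2) =
          (wt k d M)^n2 * ((wt k d M)^n1 * p - inclB k d M g1) +
          (wt k d M)^n1 * ((wt k d M)^n2 * q - inclB k d M g2) by ring]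
      exact Ideal.add_mem _ (Ideal.mul_mem_left _ _ h1) (Ideal.mul_mem_left _ _ h2)
  | mul_X p v hp =>
      obtain ⟨n, g, h⟩ := hp
      cases v with
      | inl i =>
          refine ⟨n, g * MvPolynomial.X i, ?_⟩
          have hb : inclB k d M (g * MvPolynomial.X i) =
              inclB k d M g * MvPolynomial.X (Sum.inl i) := by simp [inclB]
          rw [hb, show (wt k d M)^n * (p * MvPolynomial.X (Sum.inl i)) -
              inclB k d M g * MvPolynomial.X (Sum.inl i) =
              ((wt k d M)^n * p - inclB k d M g) * MvPolynomial.X (Sum.inl i) by ring]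
          exact Ideal.mul_mem_right _ _ h
      | inr u =>
          refine ⟨n + 1, g, ?_⟩
          have : (wt k d M)^(n+1) * (p * MvPolynomial.X (Sum.inr ())) - inclB k d M g =
              (wu k d M * wt k d M - 1) * ((wt k d M)^n * p) +
                ((wt k d M)^n * p - inclB k d M g) := by
            cases u; rw [wu, wt]; ring
          rw [this]
          exact Ideal.add_mem _ (Ideal.mul_mem_right _ _
            (Ideal.subset_span rfl)) h

noncomputable def πq : R k d M →+* (R k d M ⧸ Jdl k d M) := Ideal.Quotient.mk (Jdl k d M)
noncomputable def φq : B' k d M →+* (R k d M ⧸ Jdl k d M) := (πq k d M).comp (incl k d M)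

lemma πq_ut : πq k d M (vu k d M) * πq k d M (vt k d M) = 1 := by
  have h := ut_mem k d M
  rw [← Ideal.Quotient.eq_zero_iff_mem] at h
  have : πq k d M (vu k d M * vt k d M - 1) = 0 := h
  rw [map_sub, map_mul, map_one, sub_eq_zero] at this
  exact this

lemma πq_Tpow_mul (m : ℤ) : πq k d M (Tpow k d M m) * πq k d M (Tpow k d M (-m)) = 1 := by
  have key : ∀ n : ℕ, πq k d M (incl k d M ((wt k d M)^n)) *
      πq k d M (incl k d M ((wu k d M)^n)) = 1 := by
    intro n
    rw [map_pow, map_pow, map_pow, map_pow, incl_wt, incl_wu, ← mul_pow, mul_comm, πq_ut,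
      one_pow]
  rcases lt_trichotomy m 0 with h | rfl | h
  · rw [Tpow, Tpow, TpowB, TpowB, if_neg (by omega), if_pos (by omega), mul_comm]
    exact key (-m).toNat
  · simp [Tpow, TpowB]
  · rw [Tpow, Tpow, TpowB, TpowB, if_pos (by omega), if_neg (by omega), neg_neg]
    exact key m.toNat

noncomputable def PB' (m0 : ↥M) : Polynomial (B' k d M) :=
  X^(2*d) + ∑ i : Fin (2*d),
    C (MvPolynomial.X (Sum.inl (Sum.inr (m0,i))) : B' k d M) * X^(i:ℕ)

lemma PB'_monic (m0 : ↥M) : (PB' k d M m0).Monic := by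
  apply monic_X_pow_add
  refine lt_of_le_of_lt (degree_sum_le _ _) ?_
  rw [Finset.sup_lt_iff (by exact_mod_cast WithBot.bot_lt_coe (2*d))]
  intro i _
  refine lt_of_le_of_lt (degree_C_mul_X_pow_le _ _) ?_
  exact_mod_cast i.isLt

lemma map_PB' (m0 : ↥M) : (PB' k d M m0).map (incl k d M) =
    X^(2*d) + ∑ i : Fin (2*d), C (vc k d M m0 i) * X^(i:ℕ) := by
  simp [PB', Polynomial.map_add, Polynomial.map_pow, Polynomial.map_sum, Polynomial.map_mul,
    Polynomial.map_C, Polynomial.map_X, incl, vc]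

lemma eval_PR_mem (m0 : ↥M) (a : R k d M)
    (ha : Polynomial.eval a ((∏ i : Fin d, (X - C (vs k d M i))) *
      ∏ i : Fin d, (X - C (vτ k d M i * Tpow k d M m0))) = 0) :
    Polynomial.eval a ((PB' k d M m0).map (incl k d M)) ∈ Jdl k d M := by
  rw [map_PB']
  have hdecomp : (X^(2*d) + ∑ i : Fin (2*d), C (vc k d M m0 i) * X^(i:ℕ) :
      Polynomial (R k d M)) = Qpoly k d M m0 +
      (∏ i : Fin d, (X - C (vs k d M i))) *
        ∏ i : Fin d, (X - C (vτ k d M i * Tpow k d M m0)) := by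
    rw [Qpoly]; ring
  rw [hdecomp, eval_add, ha, add_zero, eval_eq_sum, Polynomial.sum]
  exact Ideal.sum_mem _ fun n _ => Ideal.mul_mem_right _ _ (coeff_mem k d M m0 n)

lemma integral_root (m0 : ↥M) (a : R k d M)
    (ha : Polynomial.eval a ((∏ i : Fin d, (X - C (vs k d M i))) *
      ∏ i : Fin d, (X - C (vτ k d M i * Tpow k d M m0))) = 0) :
    (φq k d M).IsIntegralElem (πq k d M a) := by
  refine ⟨PB' k d M m0, PB'_monic k d M m0, ?_⟩
  rw [φq, ← Polynomial.hom_eval₂, eval₂_eq_eval_map, πq, Ideal.Quotient.eq_zero_iff_mem]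
  exact eval_PR_mem k d M m0 a ha

lemma integral (m0 : ↥M) : (φq k d M).IsIntegral := by
  intro a
  obtain ⟨r, rfl⟩ := Ideal.Quotient.mk_surjective a
  show (φq k d M).IsIntegralElem (πq k d M r)
  induction r using MvPolynomial.induction_on with
  | C c =>
      have : πq k d M (MvPolynomial.C c) = φq k d M (MvPolynomial.C c) := by
        rw [φq, RingHom.comp_apply]
        congr 1
        simp [incl]
      rw [this]
      exact (φq k d M).isIntegralElem_map
  | add p q hp hq =>
      rw [RingHom.map_add]; exact RingHom.IsIntegralElem.add _ hp hq
  | mul_X p v hp =>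
      rw [RingHom.map_mul]
      refine RingHom.IsIntegralElem.mul _ hp ?_
      cases v with
      | inl w =>
          have : πq k d M (MvPolynomial.X (Sum.inl w)) = φq k d M (MvPolynomial.X w) := by
            rw [φq, RingHom.comp_apply]
            congr 1
            simp [incl]
          rw [this]
          exact (φq k d M).isIntegralElem_map
      | inr v' =>
          cases v' with
          | inl i =>
              rw [show (MvPolynomial.X (Sum.inr (Sum.inl i)) : R k d M) = vs k d M i from rfl]
              apply integral_root k d M m0
              have hz : Polynomial.eval (vs k d M i)
                  (∏ j : Fin d, (X - C (vs k d M j))) = 0 := by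
                rw [eval_prod]
                exact Finset.prod_eq_zero (Finset.mem_univ i) (by simp)
              rw [eval_mul, hz, zero_mul]
          | inr i =>
              have h1 : (φq k d M).IsIntegralElem
                  (πq k d M (vτ k d M i * Tpow k d M m0)) := by
                apply integral_root k d M m0
                have hz : Polynomial.eval (vτ k d M i * Tpow k d M m0)
                    (∏ j : Fin d, (X - C (vτ k d M j * Tpow k d M m0))) = 0 := by
                  rw [eval_prod]
                  exact Finset.prod_eq_zero (Finset.mem_univ i) (by simp)
                rw [eval_mul, hz, mul_zero]
              have h2 : πq k d M (MvPolynomial.X (Sum.inr (Sum.inr i))) =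
                  πq k d M (vτ k d M i * Tpow k d M m0) *
                    φq k d M (TpowB k d M (-m0)) := by
                rw [map_mul, mul_assoc, φq, RingHom.comp_apply, ← Tpow, πq_Tpow_mul, mul_one,
                  vτ]
              rw [h2]
              exact RingHom.IsIntegralElem.mul _ h1 ((φq k d M).isIntegralElem_map)


lemma eval_incl (y : Nv d M → k) (f : B' k d M) :
    MvPolynomial.eval y (incl k d M f) = MvPolynomial.eval (y ∘ Sum.inl) f := by
  simp [incl, MvPolynomial.eval_rename]

lemma eval_inclB (y : Kv d M → k) (f : B k d M) :
    MvPolynomial.eval y (inclB k d M f) = MvPolynomial.eval (y ∘ Sum.inl) f := by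
  simp [inclB, MvPolynomial.eval_rename]

lemma eval_span_ut (z : Kv d M → k)
    (h : MvPolynomial.eval z (wu k d M * wt k d M - 1) = 0) :
    ∀ f ∈ Ideal.span {wu k d M * wt k d M - 1}, MvPolynomial.eval z f = 0 := by
  intro f hf
  rw [Ideal.mem_span_singleton] at hf
  obtain ⟨c, rfl⟩ := hf
  rw [map_mul, h, zero_mul]

end SRL

set_option maxHeartbeats 1000000 in
set_option synthInstance.maxHeartbeats 400000 in
/-- **Zariski closedness of the locus of split root multisets.**  Let `k` be
algebraically closed of characteristic `0`, `d ≥ 1`, and `M ⊆ ℤ` finite.  Identify a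
monic polynomial of degree `2d` with its coefficient vector in `𝔸^{2d}`.  The set of
`(t, (P_m)) ∈ k^× × Pol_{2d}(k)^M` for which there are `d`-element multisets
`Σ¹, Σ²` of elements of `k` with (for every `m ∈ M`) the root multiset of `P_m`
equal to `Σ¹ ⊔ Σ² t^m`, is Zariski closed in `k^× × Pol_{2d}(k)^M`, i.e. is cut out
there by a set of polynomial equations in `t` and the coefficients. -/
theorem split_root_locus_zariski_closed
    (k : Type) [Field k] [IsAlgClosed k] [CharZero k]
    (d : ℕ) (hd : 1 ≤ d) (M : Finset ℤ) :
    ∃ S : Set (MvPolynomial (Unit ⊕ (↥M × Fin (2 * d))) k),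
      {x : kˣ × (↥M → Fin (2 * d) → k) |
        ∃ σ τ : Fin d → k, ∀ m : ↥M,
          (X ^ (2 * d) + ∑ i : Fin (2 * d), C (x.2 m i) * X ^ (i : ℕ)
              : Polynomial k) =
            (∏ i : Fin d, (X - C (σ i))) *
              ∏ i : Fin d, (X - C (τ i * ((x.1 ^ (m : ℤ) : kˣ) : k)))} =
      {x : kˣ × (↥M → Fin (2 * d) → k) |
        ∀ f ∈ S, MvPolynomial.eval
          (Sum.elim (fun _ : Unit => ((x.1 : k)))
            (fun q : ↥M × Fin (2 * d) => x.2 q.1 q.2)) f = 0} := by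
  classical
  rcases M.eq_empty_or_nonempty with rfl | ⟨m0v, hm0⟩
  · refine ⟨∅, ?_⟩
    ext x
    simp only [Set.mem_setOf_eq]
    constructor
    · intro _ f hf
      exact absurd hf (Set.notMem_empty f)
    · intro _
      exact ⟨0, 0, fun m => absurd m.2 (Finset.notMem_empty _)⟩
  · set m0 : ↥M := ⟨m0v, hm0⟩ with hm0def
    set A := SRL.R k d M ⧸ SRL.Jdl k d M with hA
    refine ⟨{ g | ∃ (f : SRL.B' k d M) (n : ℕ), SRL.φq k d M f = 0 ∧
      (SRL.wt k d M)^n * f - SRL.inclB k d M g ∈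
        Ideal.span {SRL.wu k d M * SRL.wt k d M - 1} }, ?_⟩
    ext x
    simp only [Set.mem_setOf_eq]
    constructor
    · -- easy direction
      rintro ⟨σ, τ, hστ⟩ g ⟨f, n, hf0, hfg⟩
      set y : SRL.Nv d M → k := Sum.elim (Sum.elim (Sum.elim (fun _ => (x.1:k))
        (fun q => x.2 q.1 q.2)) (fun _ => ((x.1⁻¹:kˣ):k))) (Sum.elim σ τ) with hy
      have h1 : MvPolynomial.eval y (SRL.vu k d M * SRL.vt k d M - 1) = 0 := by
        simp only [SRL.vu, SRL.vt, map_sub, map_mul, map_one, MvPolynomial.eval_X, hy,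
          Sum.elim_inl, Sum.elim_inr]
        simp
      have hT : ∀ m : ↥M, MvPolynomial.eval y (SRL.Tpow k d M (m:ℤ)) =
          ((x.1 ^ (m:ℤ) : kˣ) : k) := by
        intro m
        rw [SRL.Tpow, SRL.eval_incl]
        exact SRL.eval_TpowB k d M _ x.1 rfl rfl _
      have h2 : ∀ (m : ↥M) (n : ℕ),
          MvPolynomial.eval y ((SRL.Qpoly k d M m).coeff n) = 0 := by
        intro m n
        rw [← Polynomial.coeff_map, SRL.map_Qpoly, hT m]
        have : (fun i : Fin (2*d) => y (Sum.inl (Sum.inl (Sum.inr (m,i))))) =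
            (fun i => x.2 m i) := by funext i; rw [hy]; rfl
        simp only [hy, Sum.elim_inl, Sum.elim_inr]
        rw [hστ m, sub_self, Polynomial.coeff_zero]
      have hevJ := SRL.eval_Jdl k d M y h1 h2
      have hfJ : MvPolynomial.eval y (SRL.incl k d M f) = 0 := by
        apply hevJ
        exact Ideal.Quotient.eq_zero_iff_mem.mp hf0
      have hsp : MvPolynomial.eval (y ∘ Sum.inl)
          ((SRL.wt k d M)^n * f - SRL.inclB k d M g) = 0 := by
        apply SRL.eval_span_ut k d M _ _ _ hfg
        have := h1
        rw [show SRL.vu k d M * SRL.vt k d M - 1 =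
          SRL.incl k d M (SRL.wu k d M * SRL.wt k d M - 1) by
            rw [map_sub, map_mul, SRL.incl_wu, SRL.incl_wt, map_one], SRL.eval_incl] at this
        exact this
      rw [SRL.eval_incl] at hfJ
      rw [map_sub, map_mul, SRL.eval_inclB, hfJ, mul_zero, zero_sub,
        neg_eq_zero] at hsp
      have hxf : (y ∘ Sum.inl) ∘ Sum.inl = Sum.elim (fun _ : Unit => ((x.1 : k)))
          (fun q : ↥M × Fin (2 * d) => x.2 q.1 q.2) := by
        funext v
        cases v with
        | inl u => rfl
        | inr q => rfl
      rwa [hxf] at hsp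
    · -- hard direction
      intro hx
      set y' : SRL.Kv d M → k := Sum.elim (Sum.elim (fun _ => (x.1:k))
        (fun q => x.2 q.1 q.2)) (fun _ => ((x.1⁻¹:kˣ):k)) with hy'
      have hy'ut : MvPolynomial.eval y' (SRL.wu k d M * SRL.wt k d M - 1) = 0 := by
        simp only [SRL.wu, SRL.wt, map_sub, map_mul, map_one, MvPolynomial.eval_X, hy',
          Sum.elim_inl, Sum.elim_inr]
        simp
      have hxf : y' ∘ Sum.inl = Sum.elim (fun _ : Unit => ((x.1 : k)))
          (fun q : ↥M × Fin (2 * d) => x.2 q.1 q.2) := by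
        funext v
        cases v with
        | inl u => rfl
        | inr q => rfl
      -- step A
      have stepA : ∀ f : SRL.B' k d M, SRL.φq k d M f = 0 →
          MvPolynomial.eval y' f = 0 := by
        intro f hf0
        obtain ⟨n, g, hfg⟩ := SRL.select k d M f
        have hgS : MvPolynomial.eval (y' ∘ Sum.inl) g = 0 := by
          rw [hxf]
          exact hx g ⟨f, n, hf0, hfg⟩
        have := SRL.eval_span_ut k d M y' hy'ut _ hfg
        rw [map_sub, map_mul, SRL.eval_inclB, hgS, sub_zero, map_pow] at this
        have ht0 : MvPolynomial.eval y' (SRL.wt k d M) = (x.1 : k) := by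
          rw [SRL.wt, MvPolynomial.eval_X]; rfl
        rw [ht0] at this
        exact (mul_eq_zero.mp this).resolve_left (pow_ne_zero n x.1.ne_zero)
      -- integrality setup
      letI : Algebra (SRL.B' k d M) A := (SRL.φq k d M).toAlgebra
      haveI hint : Algebra.IsIntegral (SRL.B' k d M) A := ⟨fun a => SRL.integral k d M m0 a⟩
      set ev' : SRL.B' k d M →+* k := MvPolynomial.eval y' with hev'
      haveI : (RingHom.ker ev').IsMaximal :=
        RingHom.ker_isMaximal_of_surjective ev'
          (fun c => ⟨MvPolynomial.C c, MvPolynomial.eval_C _⟩)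
      have hp : RingHom.ker (algebraMap (SRL.B' k d M) A) ≤ RingHom.ker ev' := by
        intro f hf
        rw [RingHom.mem_ker] at hf ⊢
        exact stepA f hf
      obtain ⟨Q, hQmax, hQcomap⟩ :=
        Ideal.exists_ideal_over_maximal_of_isIntegral (R := SRL.B' k d M) (S := A)
          (RingHom.ker ev') hp
      haveI := hQmax
      letI : Field (A ⧸ Q) := Ideal.Quotient.field Q
      have hcomp : ∀ f : SRL.B' k d M, Ideal.Quotient.mk Q (SRL.φq k d M f) =
          algebraMap k (A ⧸ Q) (ev' f) := by
        have hker : ∀ h : SRL.B' k d M, ev' h = 0 →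
            Ideal.Quotient.mk Q (SRL.φq k d M h) = 0 := by
          intro h h0
          rw [Ideal.Quotient.eq_zero_iff_mem]
          have hm : h ∈ RingHom.ker ev' := RingHom.mem_ker.mpr h0
          rw [← hQcomap] at hm
          exact hm
        have hC : ∀ c : k, Ideal.Quotient.mk Q (SRL.φq k d M (MvPolynomial.C c)) =
            algebraMap k (A ⧸ Q) c := by
          intro c
          have h1 : SRL.φq k d M (MvPolynomial.C c) = algebraMap k A c := by
            rw [SRL.φq, RingHom.comp_apply,
              show SRL.incl k d M (MvPolynomial.C c) = MvPolynomial.C c by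
                simp [SRL.incl]]
            rfl
          rw [h1, ← Ideal.Quotient.algebraMap_eq Q, ← IsScalarTower.algebraMap_apply]
        intro f
        have h0 : ev' (f - MvPolynomial.C (ev' f)) = 0 := by
          rw [map_sub, MvPolynomial.eval_C, sub_self]
        have h1 := hker _ h0
        rw [RingHom.map_sub, RingHom.map_sub, sub_eq_zero] at h1
        rw [h1, hC]
      haveI hkint : Algebra.IsIntegral k (A ⧸ Q) := by
        refine ⟨fun z => ?_⟩
        obtain ⟨a, rfl⟩ := Ideal.Quotient.mk_surjective z
        obtain ⟨p, pm, hp2⟩ := SRL.integral k d M m0 a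
        refine ⟨p.map ev', pm.map _, ?_⟩
        rw [Polynomial.eval₂_map,
          show (algebraMap k (A ⧸ Q)).comp ev' =
            (Ideal.Quotient.mk Q).comp (SRL.φq k d M) from
              RingHom.ext fun f => (hcomp f).symm,
          ← Polynomial.hom_eval₂, hp2, map_zero]
      have hsurj : Function.Surjective (algebraMap k (A ⧸ Q)) :=
        IsAlgClosed.algebraMap_bijective_of_isIntegral.2
      have hinj : Function.Injective (algebraMap k (A ⧸ Q)) :=
        (algebraMap k (A ⧸ Q)).injective
      set e := RingEquiv.ofBijective (algebraMap k (A ⧸ Q)) ⟨hinj, hsurj⟩ with he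
      set ev'' : SRL.R k d M →+* k :=
        (e.symm : (A ⧸ Q) →+* k).comp ((Ideal.Quotient.mk Q).comp (SRL.πq k d M)) with hev''
      have hB' : ∀ f : SRL.B' k d M, ev'' (SRL.incl k d M f) = ev' f := by
        intro f
        show e.symm (Ideal.Quotient.mk Q (SRL.πq k d M (SRL.incl k d M f))) = ev' f
        rw [show SRL.πq k d M (SRL.incl k d M f) = SRL.φq k d M f from rfl, hcomp f]
        show e.symm (e (ev' f)) = ev' f
        exact e.symm_apply_apply _
      have hJ : ∀ r ∈ SRL.Jdl k d M, ev'' r = 0 := by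
        intro r hr
        show e.symm (Ideal.Quotient.mk Q (SRL.πq k d M r)) = 0
        rw [show SRL.πq k d M r = 0 by
          rw [SRL.πq, Ideal.Quotient.eq_zero_iff_mem]; exact hr, map_zero, map_zero]
      have hCc : ∀ c : k, ev'' (MvPolynomial.C c) = c := by
        intro c
        rw [show (MvPolynomial.C c : SRL.R k d M) = SRL.incl k d M (MvPolynomial.C c) by
          simp [SRL.incl], hB', MvPolynomial.eval_C]
      set z : SRL.Nv d M → k := fun v => ev'' (MvPolynomial.X v) with hzdef
      have hz : (ev'' : SRL.R k d M →+* k) = MvPolynomial.eval z := by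
        apply MvPolynomial.ringHom_ext
        · intro c
          rw [hCc, MvPolynomial.eval_C]
        · intro v
          rw [MvPolynomial.eval_X]
      have hzl : ∀ w : SRL.Kv d M, z (Sum.inl w) = y' w := by
        intro w
        rw [hzdef]
        show ev'' (MvPolynomial.X (Sum.inl w)) = y' w
        rw [show (MvPolynomial.X (Sum.inl w) : SRL.R k d M) =
          SRL.incl k d M (MvPolynomial.X w) by simp [SRL.incl], hB']
        rw [hev', MvPolynomial.eval_X]
      have hTp : ∀ m : ↥M, MvPolynomial.eval z (SRL.Tpow k d M (m:ℤ)) =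
          ((x.1 ^ (m:ℤ) : kˣ) : k) := by
        intro m
        rw [SRL.Tpow, SRL.eval_incl]
        refine SRL.eval_TpowB k d M _ x.1 ?_ ?_ _
        · show z (Sum.inl (Sum.inl (Sum.inl ()))) = _
          rw [hzl]; rfl
        · show z (Sum.inl (Sum.inr ())) = _
          rw [hzl]; rfl
      refine ⟨fun i => z (Sum.inr (Sum.inl i)), fun i => z (Sum.inr (Sum.inr i)),
        fun m => ?_⟩
      have hcoeff : ∀ n, MvPolynomial.eval z ((SRL.Qpoly k d M m).coeff n) = 0 := by
        intro n
        rw [← hz]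
        exact hJ _ (SRL.coeff_mem k d M m n)
      have h0 : (SRL.Qpoly k d M m).map (MvPolynomial.eval z) = 0 :=
        Polynomial.ext fun n => by rw [Polynomial.coeff_map, hcoeff, Polynomial.coeff_zero]
      rw [SRL.map_Qpoly, sub_eq_zero, hTp m] at h0
      have hzc : ∀ i : Fin (2*d), z (Sum.inl (Sum.inl (Sum.inr (m,i)))) = x.2 m i := by
        intro i
        rw [hzl]; rfl
      simp only [hzc] at h0
      exact h0
end

section
/- Let $p$ be a prime, $s \ge 1$, and for $r \in p^{\mathbb{Q}_{\ge 0}}$ let $\|\sum_{\vec{i}} a_{\vec{i}} T^{\vec{i}}\|_r = \sup_{\vec{i}} |a_{\vec{i}}|_p r^{|\vec{i}|}$ be the Gauss norm on $\mathbb{Z}_p[T_1,\dots,T_s]$, where $|(i_1,\dots,i_s)| = i_1 + \cdots + i_s$. Suppose $\varsigma^*: \mathbb{Z}_p[T_1,\dots,T_s] \to \mathbb{Z}_p\langle T_1,\dots,T_s\rangle_{r_1}$ is a ring homomorphism (for some $r_1 > 1$) with $\|\varsigma^*(T_j) - T_j^p\|_r < 1$ for all $j$ and all $r \in [1, r_2]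 \cap p^{\mathbb{Q}}$ for some $r_2 > 1$. Then for every $H \in \mathbb{Z}_p[T_1,\dots,T_s]$ and every $r \in (1, r_2] \cap p^{\mathbb{Q}}$ one has $\|\varsigma^*(H) - H(T_1^p, \dots, T_s^p)\|_r \le r^{-p}\|H\|_{r^p}$, and consequently $\|\varsigma^*(H)\|_r = \|H\|_{r^p}$. -/
/-- The Gauss norm `‖·‖_r` (with values in `ℝ≥0∞`) on power series over `ℤ_p`:
`‖∑ a_i T^i‖_r = sup_i |a_i|_p r^{|i|}`.  On polynomials it restricts to the Gauss
norm of the statement. -/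
noncomputable def gaussNorm (p : ℕ) [Fact p.Prime] (s : ℕ) (r : ℝ)
    (f : MvPowerSeries (Fin s) ℤ_[p]) : ENNReal :=
  ⨆ i : Fin s →₀ ℕ,
    ENNReal.ofReal (‖MvPowerSeries.coeff i f‖ * r ^ (i.sum fun _ n => n))

/-!
Write `D(H) = ς*(H) - H(T^p)`. Both `ς*` and `H ↦ H(T^p)` are ring homomorphisms, so
`D(H X_j) = D(H) D(X_j) + D(H) X_j^p + D(X_j) H(T^p)`; together with `‖D(X_j)‖_r ≤ 1` and
`‖X_j^p‖_r = r^p` this gives `‖D(a T^i)‖_r ≤ r^{-p} ‖a T^i‖_{r^p}` by induction on monomials.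
Constants satisfy `D(a) = 0` because the only ring homomorphism `ℤ_p → ℤ_p[[T]]` is the
inclusion, `ℤ_p[[T]]` being `p`-adically separated. The ultrametric inequality extends the bound
to every `H`. Finally `‖H(T^p)‖_r = ‖H‖_{r^p}` and `r^{-p} < 1`, so `ς*(H)` differs from
`H(T^p)` by something of strictly smaller norm and therefore has the same norm.
-/

open MvPowerSeries (coeff monomial X X_def X_pow_eq coeff_mul coeff_monomial
  coeff_add_mul_monomial)

theorem ENNReal.ofReal_rpow_neg_mul_ofReal_pow {r : ℝ} (hr : 0 < r) (q : ℕ) :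
    ENNReal.ofReal (r ^ (-(q : ℝ))) * ENNReal.ofReal (r ^ q) = 1 := by
  rw [← ENNReal.ofReal_mul (by positivity), ← Real.rpow_natCast, ← Real.rpow_add hr,
    neg_add_cancel, Real.rpow_zero, ENNReal.ofReal_one]

theorem MvPolynomial.aeval_X_eq_coe {σ R : Type*} [CommRing R] (H : MvPolynomial σ R) :
    MvPolynomial.aeval (fun j => (MvPowerSeries.X j : MvPowerSeries σ R)) H = H := by
  induction H using MvPolynomial.induction_on <;> simp_all [← MvPowerSeries.c_eq_algebraMap]

noncomputable def MvPolynomial.aevalXPow {σ R : Type*} [CommRing R] (q : ℕ) :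
    MvPolynomial σ R →ₐ[R] MvPowerSeries σ R :=
  MvPolynomial.aeval fun j => MvPowerSeries.X j ^ q

theorem MvPolynomial.aevalXPow_eq_coe_expand {σ R : Type*} [CommRing R] (q : ℕ)
    (H : MvPolynomial σ R) : aevalXPow q H = ↑(expand q H) := by
  rw [← aeval_X_eq_coe, aeval_expand]
  rfl

section GaussNorm

variable {p : ℕ} [Fact p.Prime] {s : ℕ} {r : ℝ}

theorem gaussNorm_le {f : MvPowerSeries (Fin s) ℤ_[p]} {c : ENNReal}
    (h : ∀ i, ENNReal.ofReal (‖coeff i f‖ * r ^ i.degree) ≤ c) : gaussNorm p s r f ≤ c :=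
  iSup_le h

theorem le_gaussNorm (f : MvPowerSeries (Fin s) ℤ_[p]) (i : Fin s →₀ ℕ) :
    ENNReal.ofReal (‖coeff i f‖ * r ^ i.degree) ≤ gaussNorm p s r f :=
  le_iSup (fun i => ENNReal.ofReal (‖coeff i f‖ * r ^ i.degree)) i

@[simp]
theorem gaussNorm_zero : gaussNorm p s r 0 = 0 := by
  simp [_root_.gaussNorm]

@[simp]
theorem gaussNorm_neg (f : MvPowerSeries (Fin s) ℤ_[p]) :
    gaussNorm p s r (-f) = gaussNorm p s r f := by
  simp [_root_.gaussNorm]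

theorem gaussNorm_add_le (hr : 0 ≤ r) (f g : MvPowerSeries (Fin s) ℤ_[p]) :
    gaussNorm p s r (f + g) ≤ max (gaussNorm p s r f) (gaussNorm p s r g) := by
  refine gaussNorm_le fun i => ?_
  calc ENNReal.ofReal (‖coeff i (f + g)‖ * r ^ i.degree)
      ≤ ENNReal.ofReal (max (‖coeff i f‖ * r ^ i.degree) (‖coeff i g‖ * r ^ i.degree)) := by
        rw [map_add, ← max_mul_of_nonneg _ _ (by positivity)]
        gcongr
        exact PadicInt.nonarchimedean _ _
    _ ≤ _ := by
        rw [ENNReal.ofReal_max]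
        exact max_le_max (le_gaussNorm f i) (le_gaussNorm g i)

theorem gaussNorm_sum_le (hr : 0 ≤ r) {ι : Type*} (t : Finset ι)
    {F : ι → MvPowerSeries (Fin s) ℤ_[p]} {c : ENNReal} (h : ∀ x ∈ t, gaussNorm p s r (F x) ≤ c) :
    gaussNorm p s r (∑ x ∈ t, F x) ≤ c :=
  Finset.sum_induction F (fun f => gaussNorm p s r f ≤ c)
    (fun f g hf hg => (gaussNorm_add_le hr f g).trans (max_le hf hg)) (by simp) h

theorem gaussNorm_eq_of_sub_lt (hr : 0 ≤ r) {f g : MvPowerSeries (Fin s) ℤ_[p]}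
    (h : gaussNorm p s r (f - g) < gaussNorm p s r g) :
    gaussNorm p s r f = gaussNorm p s r g := by
  have hfg : gaussNorm p s r f ≤ gaussNorm p s r g := by
    simpa using (gaussNorm_add_le hr (f - g) g).trans (max_le h.le le_rfl)
  have hgf : gaussNorm p s r g ≤ max (gaussNorm p s r f) (gaussNorm p s r (f - g)) := by
    have := gaussNorm_add_le hr f (-(f - g))
    rwa [gaussNorm_neg, ← sub_eq_add_neg, sub_sub_cancel] at this
  exact hfg.antisymm ((le_max_iff.1 hgf).resolve_right h.not_ge)

theorem gaussNorm_mul_le (hr : 0 ≤ r) (f g : MvPowerSeries (Fin s) ℤ_[p]) :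
    gaussNorm p s r (f * g) ≤ gaussNorm p s r f * gaussNorm p s r g := by
  refine gaussNorm_le fun i => ?_
  rw [coeff_mul]
  obtain ⟨x, hx, hle⟩ := IsUltrametricDist.exists_norm_finsetSum_le_of_nonempty
    (⟨(0, i), by simp⟩ : (Finset.HasAntidiagonal.antidiagonal i).Nonempty)
    fun x : (Fin s →₀ ℕ) × (Fin s →₀ ℕ) => coeff x.1 f * coeff x.2 g
  rw [Finset.HasAntidiagonal.mem_antidiagonal] at hx
  calc _ ≤ ENNReal.ofReal ((‖coeff x.1 f‖ * r ^ x.1.degree) *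
        (‖coeff x.2 g‖ * r ^ x.2.degree)) := by
        refine ENNReal.ofReal_le_ofReal ?_
        calc _ ≤ ‖coeff x.1 f * coeff x.2 g‖ * r ^ i.degree := by gcongr
          _ = _ := by rw [← hx, map_add, pow_add, norm_mul]; ring
    _ = ENNReal.ofReal (‖coeff x.1 f‖ * r ^ x.1.degree) *
          ENNReal.ofReal (‖coeff x.2 g‖ * r ^ x.2.degree) := ENNReal.ofReal_mul (by positivity)
    _ ≤ _ := mul_le_mul' (le_gaussNorm f x.1) (le_gaussNorm g x.2)

theorem gaussNorm_monomial (m : Fin s →₀ ℕ) (a : ℤ_[p]) :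
    gaussNorm p s r (monomial m a) = ENNReal.ofReal (‖a‖ * r ^ m.degree) := by
  classical
  refine le_antisymm (gaussNorm_le fun i => ?_) ?_
  · rw [coeff_monomial]
    split_ifs with h
    · rw [h]
    · simp
  · simpa using le_gaussNorm (r := r) (monomial m a) m

theorem gaussNorm_X_pow (j : Fin s) (n : ℕ) :
    gaussNorm p s r (X j ^ n) = ENNReal.ofReal (r ^ n) := by
  simp [X_pow_eq, gaussNorm_monomial]

theorem gaussNorm_mul_X (hr : 0 ≤ r) (f : MvPowerSeries (Fin s) ℤ_[p]) (j : Fin s) :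
    gaussNorm p s r (f * X j) = ENNReal.ofReal r * gaussNorm p s r f := by
  refine le_antisymm ?_ ?_
  · calc _ ≤ gaussNorm p s r f * gaussNorm p s r (X j) := gaussNorm_mul_le hr f (X j)
      _ = _ := by rw [← pow_one (X j), gaussNorm_X_pow, pow_one, mul_comm]
  · rw [_root_.gaussNorm, ENNReal.mul_iSup]
    refine iSup_le fun i => ?_
    have hcoeff : coeff (i + Finsupp.single j 1) (f * X j) = coeff i f := by
      rw [X_def, coeff_add_mul_monomial, mul_one]
    calc ENNReal.ofReal r * ENNReal.ofReal (‖coeff i f‖ * r ^ i.degree)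
        = ENNReal.ofReal (‖coeff (i + Finsupp.single j 1) (f * X j)‖ *
            r ^ (i + Finsupp.single j 1).degree) := by
          rw [← ENNReal.ofReal_mul hr, hcoeff, map_add, Finsupp.degree_single, pow_succ]
          ring_nf
      _ ≤ _ := le_gaussNorm _ _

theorem gaussNorm_coe_monomial_coeff_le (H : MvPolynomial (Fin s) ℤ_[p]) (i : Fin s →₀ ℕ) :
    gaussNorm p s r ↑(MvPolynomial.monomial i (H.coeff i)) ≤ gaussNorm p s r H := by
  rw [MvPolynomial.coe_monomial, gaussNorm_monomial, ← MvPolynomial.coeff_coe]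
  exact le_gaussNorm _ i

theorem gaussNorm_coe_ne_top (H : MvPolynomial (Fin s) ℤ_[p]) : gaussNorm p s r H ≠ ⊤ := by
  refine ne_top_of_le_ne_top (ENNReal.sum_ne_top.2 fun i _ => ENNReal.ofReal_ne_top)
    (gaussNorm_le (c := ∑ i ∈ H.support, ENNReal.ofReal (‖H.coeff i‖ * r ^ i.degree)) fun i => ?_)
  rw [MvPolynomial.coeff_coe]
  by_cases hi : i ∈ H.support
  · exact Finset.single_le_sum (f := fun i => ENNReal.ofReal (‖H.coeff i‖ * r ^ i.degree))
      (fun _ _ => bot_le) hi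
  · simp [MvPolynomial.notMem_support_iff.1 hi]

theorem gaussNorm_coe_ne_zero (hr : 0 < r) {H : MvPolynomial (Fin s) ℤ_[p]} (hH : H ≠ 0) :
    gaussNorm p s r H ≠ 0 := by
  obtain ⟨i, hi⟩ := MvPolynomial.ne_zero_iff.1 hH
  refine (lt_of_lt_of_le ?_ (le_gaussNorm (r := r) (H : MvPowerSeries (Fin s) ℤ_[p]) i)).ne'
  rw [MvPolynomial.coeff_coe]
  exact ENNReal.ofReal_pos.2 (mul_pos (norm_pos_iff.2 hi) (pow_pos hr _))

theorem gaussNorm_aevalXPow {q : ℕ} (hq : q ≠ 0) (H : MvPolynomial (Fin s) ℤ_[p]) :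
    gaussNorm p s r (MvPolynomial.aevalXPow q H) = gaussNorm p s (r ^ q) H := by
  classical
  rw [MvPolynomial.aevalXPow_eq_coe_expand]
  refine le_antisymm (gaussNorm_le fun m => ?_) (gaussNorm_le fun i => ?_)
  · rw [MvPolynomial.coeff_coe]
    by_cases hm : m ∈ (MvPolynomial.expand q H).support
    · obtain ⟨i, -, rfl⟩ := Finset.mem_image.1 (MvPolynomial.support_expand_subset H hm)
      rw [MvPolynomial.coeff_expand_smul _ hq, map_nsmul, smul_eq_mul, pow_mul,
        ← MvPolynomial.coeff_coe]
      exact le_gaussNorm _ i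
    · simp [MvPolynomial.notMem_support_iff.1 hm]
  · have hdeg : (r ^ q) ^ i.degree = r ^ (q • i).degree := by
      rw [map_nsmul, smul_eq_mul, pow_mul]
    rw [MvPolynomial.coeff_coe, ← MvPolynomial.coeff_expand_smul q hq, hdeg,
      ← MvPolynomial.coeff_coe]
    exact le_gaussNorm _ (q • i)

end GaussNorm

theorem PadicInt.ringHom_eq_mvPowerSeries_C {p : ℕ} [Fact p.Prime] {σ : Type*}
    (f : ℤ_[p] →+* MvPowerSeries σ ℤ_[p]) : f = MvPowerSeries.C := by
  ext a m
  rw [← sub_eq_zero, ← map_sub]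
  by_contra hne
  obtain ⟨k, hk⟩ := FiniteMultiplicity.of_not_isUnit PadicInt.prime_p.not_isUnit hne
  obtain ⟨b, hb⟩ := Ideal.mem_span_singleton'.1 (PadicInt.appr_spec (k + 1) a)
  -- `a` is a natural number modulo `p ^ (k + 1)`, and `f` agrees with `C` on natural numbers.
  have hdecomp : f a - MvPowerSeries.C a =
      (f b - MvPowerSeries.C b) * MvPowerSeries.C ((p : ℤ_[p]) ^ (k + 1)) := by
    rw [eq_add_of_sub_eq' hb.symm]
    simp only [map_add, map_mul, map_pow, map_natCast]
    ring
  exact hk ⟨_, by rw [hdecomp, MvPowerSeries.coeff_mul_C, mul_comm]⟩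

section FrobeniusLift

variable {p : ℕ} [Fact p.Prime] {s : ℕ}
  (ς : MvPolynomial (Fin s) ℤ_[p] →+* MvPowerSeries (Fin s) ℤ_[p]) {q : ℕ} {r : ℝ}

theorem gaussNorm_sub_aevalXPow_monomial_le (hr : 1 ≤ r) (hq : q ≠ 0)
    (hC : ς.comp MvPolynomial.C = MvPowerSeries.C)
    (hX : ∀ j, gaussNorm p s r (ς (MvPolynomial.X j) - X j ^ q) ≤ 1)
    (i : Fin s →₀ ℕ) (a : ℤ_[p]) :
    gaussNorm p s r
        (ς (MvPolynomial.monomial i a) - MvPolynomial.aevalXPow q (MvPolynomial.monomial i a)) ≤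
      ENNReal.ofReal (r ^ (-(q : ℝ))) * gaussNorm p s (r ^ q) ↑(MvPolynomial.monomial i a) := by
  have hr0 : 0 ≤ r := zero_le_one.trans hr
  set d := ENNReal.ofReal (r ^ (-(q : ℝ)))
  have hdc : d * ENNReal.ofReal (r ^ q) = 1 :=
    ENNReal.ofReal_rpow_neg_mul_ofReal_pow (zero_lt_one.trans_le hr) q
  have hd : d ≤ 1 :=
    ENNReal.ofReal_le_one.2 (Real.rpow_le_one_of_one_le_of_nonpos hr (by simp))
  refine MvPolynomial.induction_on_monomial (motive := fun P =>
    gaussNorm p s r (ς P - MvPolynomial.aevalXPow q P) ≤ d * gaussNorm p s (r ^ q) ↑P)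
    (fun a => ?_) (fun P j ih => ?_) i a
  · simp [MvPolynomial.aevalXPow, ← RingHom.comp_apply, hC, MvPowerSeries.c_eq_algebraMap]
  · have hsplit : ς (P * MvPolynomial.X j) - MvPolynomial.aevalXPow q (P * MvPolynomial.X j) =
        (ς P - MvPolynomial.aevalXPow q P) * (ς (MvPolynomial.X j) - X j ^ q) +
        (ς P - MvPolynomial.aevalXPow q P) * X j ^ q +
        (ς (MvPolynomial.X j) - X j ^ q) * MvPolynomial.aevalXPow q P := by
      rw [map_mul, map_mul, MvPolynomial.aevalXPow, MvPolynomial.aeval_X]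
      ring
    set v := gaussNorm p s (r ^ q) ↑P
    have hPX : d * gaussNorm p s (r ^ q) ↑(P * MvPolynomial.X j : MvPolynomial (Fin s) ℤ_[p]) =
        v := by
      rw [MvPolynomial.coe_mul, MvPolynomial.coe_X, gaussNorm_mul_X (pow_nonneg hr0 q),
        ← mul_assoc, hdc, one_mul]
    rw [hsplit, hPX]
    refine (gaussNorm_add_le hr0 _ _).trans
      (max_le ((gaussNorm_add_le hr0 _ _).trans (max_le ?_ ?_)) ?_) <;>
      refine (gaussNorm_mul_le hr0 _ _).trans ?_
    · calc _ ≤ d * v * 1 := mul_le_mul' ih (hX j)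
        _ ≤ v := by rw [mul_one]; exact mul_le_of_le_one_left' hd
    · calc _ ≤ d * v * ENNReal.ofReal (r ^ q) := mul_le_mul' ih (gaussNorm_X_pow j q).le
        _ = v := by rw [mul_right_comm, hdc, one_mul]
    · calc _ ≤ 1 * v := mul_le_mul' (hX j) (gaussNorm_aevalXPow hq P).le
        _ = v := one_mul v

theorem gaussNorm_sub_aevalXPow_le (hr : 1 ≤ r) (hq : q ≠ 0)
    (hC : ς.comp MvPolynomial.C = MvPowerSeries.C)
    (hX : ∀ j, gaussNorm p s r (ς (MvPolynomial.X j) - X j ^ q) ≤ 1)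
    (H : MvPolynomial (Fin s) ℤ_[p]) :
    gaussNorm p s r (ς H - MvPolynomial.aevalXPow q H) ≤
      ENNReal.ofReal (r ^ (-(q : ℝ))) * gaussNorm p s (r ^ q) H := by
  conv_lhs => rw [H.as_sum, map_sum, map_sum, ← Finset.sum_sub_distrib]
  refine gaussNorm_sum_le (zero_le_one.trans hr) _ fun i _ => ?_
  grw [gaussNorm_sub_aevalXPow_monomial_le ς hr hq hC hX, gaussNorm_coe_monomial_coeff_le]

theorem gaussNorm_eq_of_sub_aevalXPow_le (hr : 1 < r) (hq : q ≠ 0)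
    {f : MvPowerSeries (Fin s) ℤ_[p]} {H : MvPolynomial (Fin s) ℤ_[p]}
    (hf : gaussNorm p s r (f - MvPolynomial.aevalXPow q H) ≤
      ENNReal.ofReal (r ^ (-(q : ℝ))) * gaussNorm p s (r ^ q) H) :
    gaussNorm p s r f = gaussNorm p s (r ^ q) H := by
  rcases eq_or_ne H 0 with rfl | hH
  · simpa using hf
  have hd : ENNReal.ofReal (r ^ (-(q : ℝ))) < 1 :=
    ENNReal.ofReal_lt_one.2 (Real.rpow_lt_one_of_one_lt_of_neg hr (by simpa using hq.bot_lt))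
  have hlt : ENNReal.ofReal (r ^ (-(q : ℝ))) * gaussNorm p s (r ^ q) H <
      gaussNorm p s (r ^ q) H := by
    simpa using ENNReal.mul_lt_mul_left (gaussNorm_coe_ne_zero (by positivity) hH)
      (gaussNorm_coe_ne_top H) hd
  rw [← gaussNorm_aevalXPow (r := r) hq H] at hf hlt ⊢
  exact gaussNorm_eq_of_sub_lt (zero_le_one.trans hr.le) (hf.trans_lt hlt)

end FrobeniusLift

theorem frobenius_lift_gauss_norm_general
    (p : ℕ) [Fact p.Prime] (s : ℕ)
    (ς : MvPolynomial (Fin s) ℤ_[p] →+* MvPowerSeries (Fin s) ℤ_[p])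
    (r₂ : ℝ)
    (hgen : ∀ (j : Fin s) (r : ℝ), 1 ≤ r → r ≤ r₂ →
      (∃ q : ℚ, r = (p : ℝ) ^ (q : ℝ)) →
      gaussNorm p s r (ς (MvPolynomial.X j) - (MvPowerSeries.X j) ^ p) < 1) :
    ∀ (H : MvPolynomial (Fin s) ℤ_[p]) (r : ℝ), 1 < r → r ≤ r₂ →
      (∃ q : ℚ, r = (p : ℝ) ^ (q : ℝ)) →
      gaussNorm p s r
          (ς H - MvPolynomial.aeval
            (fun j => (MvPowerSeries.X j : MvPowerSeries (Fin s) ℤ_[p]) ^ p) H) ≤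
          ENNReal.ofReal (r ^ (-(p : ℝ))) *
            gaussNorm p s (r ^ (p : ℕ))
              (MvPolynomial.aeval
                (fun j => (MvPowerSeries.X j : MvPowerSeries (Fin s) ℤ_[p])) H) ∧
        gaussNorm p s r (ς H) =
          gaussNorm p s (r ^ (p : ℕ))
            (MvPolynomial.aeval
              (fun j => (MvPowerSeries.X j : MvPowerSeries (Fin s) ℤ_[p])) H) := by
  intro H r hr hr₂ hrp
  have hp : p ≠ 0 := (Fact.out : p.Prime).ne_zero
  have hC : ς.comp MvPolynomial.C = MvPowerSeries.C := PadicInt.ringHom_eq_mvPowerSeries_C _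
  have hX (j : Fin s) : gaussNorm p s r (ς (MvPolynomial.X j) - X j ^ p) ≤ 1 :=
    (hgen j r hr.le hr₂ hrp).le
  have hdefect := gaussNorm_sub_aevalXPow_le ς hr.le hp hC hX H
  rw [MvPolynomial.aeval_X_eq_coe]
  exact ⟨hdefect, gaussNorm_eq_of_sub_aevalXPow_le hr hp hdefect⟩

/-- **Gauss norm estimate for a Frobenius lift.**  Suppose
`ς* : ℤ_p[T_1,…,T_s] → ℤ_p⟨T_1,…,T_s⟩_{r₁}` (for some `r₁ > 1`) is a ring
homomorphism with `‖ς*(T_j) - T_j^p‖_r < 1` for all `j` and all `r ∈ [1, r₂] ∩ p^ℚ`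
for some `r₂ > 1`.  Then for every `H ∈ ℤ_p[T]` and `r ∈ (1, r₂] ∩ p^ℚ`,
`‖ς*(H) - H(T^p)‖_r ≤ r^{-p} ‖H‖_{r^p}` and consequently `‖ς*(H)‖_r = ‖H‖_{r^p}`. -/
theorem frobenius_lift_gauss_norm
    (p : ℕ) [Fact p.Prime] (s : ℕ) (hs : 1 ≤ s)
    (ς : MvPolynomial (Fin s) ℤ_[p] →+* MvPowerSeries (Fin s) ℤ_[p])
    (hland : ∃ r₁ : ℝ, 1 < r₁ ∧ ∀ H, gaussNorm p s r₁ (ς H) ≠ ⊤)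
    (r₂ : ℝ) (hr₂ : 1 < r₂)
    (hgen : ∀ (j : Fin s) (r : ℝ), 1 ≤ r → r ≤ r₂ →
      (∃ q : ℚ, r = (p : ℝ) ^ (q : ℝ)) →
      gaussNorm p s r (ς (MvPolynomial.X j) - (MvPowerSeries.X j) ^ p) < 1) :
    ∀ (H : MvPolynomial (Fin s) ℤ_[p]) (r : ℝ), 1 < r → r ≤ r₂ →
      (∃ q : ℚ, r = (p : ℝ) ^ (q : ℝ)) →
      gaussNorm p s r
          (ς H - MvPolynomial.aeval
            (fun j => (MvPowerSeries.X j : MvPowerSeries (Fin s) ℤ_[p]) ^ p) H) ≤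
          ENNReal.ofReal (r ^ (-(p : ℝ))) *
            gaussNorm p s (r ^ (p : ℕ))
              (MvPolynomial.aeval
                (fun j => (MvPowerSeries.X j : MvPowerSeries (Fin s) ℤ_[p])) H) ∧
        gaussNorm p s r (ς H) =
          gaussNorm p s (r ^ (p : ℕ))
            (MvPolynomial.aeval
              (fun j => (MvPowerSeries.X j : MvPowerSeries (Fin s) ℤ_[p])) H) :=
  frobenius_lift_gauss_norm_general p s ς r₂ hgen
end

section
/- Let $G$ be a (possibly disconnected) reductive algebraic group over an algebraically closed field $k$ of characteristic $0$, let $G^0$ be its identity component and $Z(G^0)^0$ the identity component of the centre of $G^0$. Let $\mu: G \to \mathbb{G}_m$ be a character of $G$ whose restriction to $Z(G^0)^0$ is non-trivial. Then the restriction of $\mu$ to the identity component $Z(G)^0$ of the centre of $G$ is non-trivial. -/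
open Matrix MvPolynomial

variable (k : Type) [Field k]

/-- The Zariski topology on affine space `ι → k`: generated by the complements of
zero sets of polynomials. -/
def zariskiTopology (ι : Type) [Fintype ι] : TopologicalSpace (ι → k) :=
  TopologicalSpace.generateFrom
    {U | ∃ f : MvPolynomial ι k, U = {x | MvPolynomial.eval x f ≠ 0}}

/-- The embedding of `GL_n(k)` into affine space via the matrix entries and the
determinant of the inverse. -/
def glEmbedding (n : ℕ) (g : GL (Fin n) k) : ((Fin n × Fin n) ⊕ Unit) → k :=
  Sum.elim (fun q => (g : Matrix (Fin n) (Fin n) k) q.1 q.2)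
    (fun _ => ((↑(g⁻¹) : Matrix (Fin n) (Fin n) k)).det)

/-- The Zariski topology on `GL_n(k)` (as a closed subvariety of affine
`(n² + 1)`-space). -/
instance glZariskiTopology (n : ℕ) : TopologicalSpace (GL (Fin n) k) :=
  TopologicalSpace.induced (glEmbedding k n) (zariskiTopology k _)

/-- The identity component of a subset of `GL_n(k)` (for the Zariski topology). -/
def idComponent {n : ℕ} (s : Set (GL (Fin n) k)) : Set (GL (Fin n) k) :=
  {g | ∃ (hg : g ∈ s) (h1 : (1 : GL (Fin n) k) ∈ s),
    (⟨g, hg⟩ : s) ∈ connectedComponent (⟨1, h1⟩ : s)}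

/-- The centralizer of a subset of `GL_n(k)` inside itself. -/
def centerOf {n : ℕ} (s : Set (GL (Fin n) k)) : Set (GL (Fin n) k) :=
  {g | g ∈ s ∧ ∀ h ∈ s, g * h = h * g}

/-- A unipotent element of `GL_n(k)`. -/
def IsUnipotentElt {n : ℕ} (g : GL (Fin n) k) : Prop :=
  ((g : Matrix (Fin n) (Fin n) k) - 1) ^ n = 0

/-- A (possibly disconnected) Zariski-closed subgroup of `GL_n(k)` is reductive if
its only Zariski-closed connected normal subgroup all of whose elements are
unipotent is the trivial one (unipotent radical is trivial; char 0). -/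
def IsReductiveSubgroup {n : ℕ} (G : Subgroup (GL (Fin n) k)) : Prop :=
  ∀ N : Subgroup (GL (Fin n) k), (N : Set (GL (Fin n) k)) ⊆ G →
    IsClosed (N : Set (GL (Fin n) k)) →
    (∀ g ∈ G, ∀ x ∈ N, g * x * g⁻¹ ∈ N) →
    IsPreconnected (N : Set (GL (Fin n) k)) →
    (∀ x ∈ N, IsUnipotentElt k x) → N = ⊥

/-- An algebraic character of a closed subgroup `G ≤ GL_n(k)`: a homomorphism
`G → k^×` given on `G` by a polynomial in the matrix entries divided by a power of
the determinant. -/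
def IsAlgebraicCharacter {n : ℕ} (G : Subgroup (GL (Fin n) k))
    (μ : GL (Fin n) k → kˣ) : Prop :=
  (∀ g ∈ G, ∀ h ∈ G, μ (g * h) = μ g * μ h) ∧
  ∃ (f : MvPolynomial (Fin n × Fin n) k) (m : ℕ),
    ∀ g ∈ G, ((μ g : kˣ) : k) * ((g : Matrix (Fin n) (Fin n) k).det) ^ m =
      MvPolynomial.eval (fun q => (g : Matrix (Fin n) (Fin n) k) q.1 q.2) f

/-!
The proof is a norm argument. The Zariski topology is Noetherian, so `G⁰` has finite index in
`G`. For `z ∈ Z(G⁰)` the product `N(z) = ∏ g z g⁻¹` over representatives `g` of `G/G⁰` does not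
depend on the representatives, is central in `G`, and is a polynomial in `z`; hence `N` maps
`Z(G⁰)⁰` into `Z(G)⁰`, and `μ (N z) = μ z ^ [G : G⁰]`. So if `μ` were trivial on `Z(G)⁰`, it would
take only finitely many values (roots of unity) on the connected set `Z(G⁰)⁰`; its fibres being
closed, it would be constant, hence trivial, there.
-/

open Set TopologicalSpace

theorem IsPreconnected.apply_eq_of_isClosed_fiber {X Y : Type*} [TopologicalSpace X]
    {s : Set X} (hs : IsPreconnected s) {f : X → Y} (hfin : (f '' s).Finite)
    (hclosed : ∀ y, IsClosed (f ⁻¹' {y})) {x y : X} (hx : x ∈ s) (hy : y ∈ s) :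
    f y = f x := by
  classical
  set v := ⋃ b ∈ hfin.toFinset.erase (f x), f ⁻¹' {b}
  have hcover : s ⊆ f ⁻¹' {f x} ∪ v := fun z hz => by
    by_cases hzx : f z = f x
    · exact Or.inl hzx
    · exact Or.inr (mem_biUnion (by simp [hzx, mem_image_of_mem f hz]) rfl)
  have hdisj : s ∩ (f ⁻¹' {f x} ∩ v) = ∅ := by
    ext z
    simp [v]
  rcases isPreconnected_iff_subset_of_disjoint_closed.1 hs _ v (hclosed _)
    (isClosed_biUnion_finset fun b _ => hclosed b) hcover hdisj with hs' | hs'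
  · exact hs' hy
  · simpa [v] using hs' hx

theorem TopologicalSpace.NoetherianSpace.finite_connectedComponents {X : Type*}
    [TopologicalSpace X] [NoetherianSpace X] : Finite (ConnectedComponents X) := by
  have := (NoetherianSpace.finite_irreducibleComponents (α := X)).to_subtype
  refine Finite.of_surjective
    (fun Z : irreducibleComponents X => ConnectedComponents.mk Z.2.1.1.some) fun c => ?_
  obtain ⟨x, rfl⟩ := ConnectedComponents.surjective_coe c
  have hirr : IsIrreducible (irreducibleComponent x) := isIrreducible_irreducibleComponent
  refine ⟨⟨_, irreducibleComponent_mem_irreducibleComponents x⟩, ?_⟩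
  exact ConnectedComponents.coe_eq_coe'.2 <| hirr.2.isPreconnected.subset_connectedComponent
    mem_irreducibleComponent hirr.1.some_mem

section IdentityComponent

variable {Γ : Type*} [Group Γ] [TopologicalSpace Γ] [SeparatelyContinuousMul Γ] (G : Subgroup Γ)

namespace Subgroup

theorem mapsTo_mul_left_connectedComponentIn {g x : Γ} (hg : g ∈ G) (hx : x ∈ G) :
    MapsTo (g * ·) (connectedComponentIn G x) (connectedComponentIn G (g * x)) :=
  ((continuous_const_mul g).continuousOn.mapsTo_connectedComponentIn hx).mono_right
    (connectedComponentIn_mono _ (image_subset_iff.2 fun _ hy => G.mul_mem hg hy))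

theorem mapsTo_mul_right_connectedComponentIn {g x : Γ} (hg : g ∈ G) (hx : x ∈ G) :
    MapsTo (· * g) (connectedComponentIn G x) (connectedComponentIn G (x * g)) :=
  ((continuous_mul_const g).continuousOn.mapsTo_connectedComponentIn hx).mono_right
    (connectedComponentIn_mono _ (image_subset_iff.2 fun _ hy => G.mul_mem hy hg))

theorem inv_mul_mem_connectedComponentIn {x y : Γ} (hx : x ∈ G)
    (hy : y ∈ connectedComponentIn G x) : x⁻¹ * y ∈ connectedComponentIn G 1 := by
  simpa using G.mapsTo_mul_left_connectedComponentIn (G.inv_mem hx) hx hy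

def identityComponent : Subgroup Γ where
  carrier := connectedComponentIn G 1
  one_mem' := mem_connectedComponentIn G.one_mem
  mul_mem' {x y} hx hy := by
    have := G.mapsTo_mul_left_connectedComponentIn (connectedComponentIn_subset _ _ hx)
      G.one_mem hy
    rwa [mul_one, ← connectedComponentIn_eq hx] at this
  inv_mem' {x} hx := by
    have h1 : 1 ∈ connectedComponentIn G x :=
      connectedComponentIn_eq hx ▸ mem_connectedComponentIn G.one_mem
    simpa using G.inv_mul_mem_connectedComponentIn (connectedComponentIn_subset _ _ hx) h1

theorem coe_identityComponent : (G.identityComponent : Set Γ) = connectedComponentIn G 1 := rfl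

theorem mem_identityComponent {x : Γ} :
    x ∈ G.identityComponent ↔ x ∈ connectedComponentIn G 1 := Iff.rfl

theorem identityComponent_le : G.identityComponent ≤ G := connectedComponentIn_subset _ _

theorem conj_mem_identityComponent {g x : Γ} (hg : g ∈ G) (hx : x ∈ G.identityComponent) :
    g * x * g⁻¹ ∈ G.identityComponent := by
  have hgx := G.mapsTo_mul_left_connectedComponentIn hg G.one_mem hx
  rw [mul_one] at hgx
  rw [mem_identityComponent]
  simpa using G.mapsTo_mul_right_connectedComponentIn (G.inv_mem hg) hg hgx

theorem le_normalizer_identityComponent : G ≤ normalizer (G.identityComponent : Set Γ) :=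
  fun g hg => mem_normalizer_iff.2 fun x =>
    ⟨G.conj_mem_identityComponent hg, fun h => by
      simpa [mul_assoc] using G.conj_mem_identityComponent (G.inv_mem hg) h⟩

instance finiteIndex_identityComponent [NoetherianSpace Γ] :
    (G.identityComponent.subgroupOf G).FiniteIndex := by
  have : NoetherianSpace G := NoetherianSpace.set (G : Set Γ)
  have := NoetherianSpace.finite_connectedComponents (X := G)
  let f : ConnectedComponents G → G ⧸ G.identityComponent.subgroupOf G :=
    Quotient.lift QuotientGroup.mk fun x y hxy => by
      have hy : (y : Γ) ∈ connectedComponentIn (G : Set Γ) x := by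
        rw [connectedComponentIn_eq_image x.2]
        exact ⟨y, (hxy : connectedComponent x = connectedComponent y) ▸ mem_connectedComponent, rfl⟩
      exact QuotientGroup.eq.2 (G.inv_mul_mem_connectedComponentIn x.2 hy)
  have : Finite (G ⧸ G.identityComponent.subgroupOf G) :=
    Finite.of_surjective f (Function.Surjective.of_comp (g := ConnectedComponents.mk)
      QuotientGroup.mk_surjective)
  exact finiteIndex_of_finite_quotient

end Subgroup

end IdentityComponent

section Norm

open scoped IsMulCommutative

variable {Γ : Type*} [Group Γ]

namespace Subgroup

def ambientCenter (H : Subgroup Γ) : Subgroup Γ := H ⊓ centralizer H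

variable {H : Subgroup Γ}

theorem mem_ambientCenter {z : Γ} :
    z ∈ H.ambientCenter ↔ z ∈ H ∧ ∀ h ∈ H, z * h = h * z := by
  simp only [ambientCenter, mem_inf, mem_centralizer_iff, eq_comm (a := _ * z)]
  rfl

theorem ambientCenter_le : H.ambientCenter ≤ H := inf_le_left

instance : IsMulCommutative H.ambientCenter :=
  .of_setLike_mul_comm fun a ha _ hb =>
    ((mem_ambientCenter.1 hb).2 a (mem_ambientCenter.1 ha).1).symm

theorem conj_eq_of_mem_ambientCenter {h z : Γ} (hh : h ∈ H) (hz : z ∈ H.ambientCenter) :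
    h * z * h⁻¹ = z := by
  rw [← (mem_ambientCenter.1 hz).2 h hh, mul_inv_cancel_right]

theorem conj_mem_ambientCenter {g z : Γ} (hg : g ∈ normalizer (H : Set Γ))
    (hz : z ∈ H.ambientCenter) : g * z * g⁻¹ ∈ H.ambientCenter := by
  rw [mem_normalizer_iff] at hg
  refine mem_ambientCenter.2 ⟨(hg z).1 (mem_ambientCenter.1 hz).1, fun h hh => ?_⟩
  have hh' : g⁻¹ * h * g ∈ H := (hg _).2 (by simpa [mul_assoc] using hh)
  calc g * z * g⁻¹ * h = g * (z * (g⁻¹ * h * g)) * g⁻¹ := by group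
    _ = g * ((g⁻¹ * h * g) * z) * g⁻¹ := by rw [(mem_ambientCenter.1 hz).2 _ hh']
    _ = h * (g * z * g⁻¹) := by group

def ambientCenterConj {g : Γ} (hg : g ∈ normalizer (H : Set Γ)) :
    H.ambientCenter →* H.ambientCenter :=
  ((MulAut.conj g).toMonoidHom.comp H.ambientCenter.subtype).codRestrict _
    fun z => conj_mem_ambientCenter hg z.2

@[simp]
theorem coe_ambientCenterConj {g : Γ} (hg : g ∈ normalizer (H : Set Γ)) (z : H.ambientCenter) :
    (ambientCenterConj hg z : Γ) = g * z * g⁻¹ := rfl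

variable (G : Subgroup Γ)

theorem out_conj_eq {z : Γ} (hz : z ∈ H.ambientCenter) (x : G) :
    ((x : G ⧸ H.subgroupOf G).out : Γ) * z * ((x : G ⧸ H.subgroupOf G).out : Γ)⁻¹ =
      x * z * (x : Γ)⁻¹ := by
  obtain ⟨h, hx⟩ := QuotientGroup.mk_out_eq_mul (H.subgroupOf G) x
  have hh : (h : Γ) ∈ H := h.2
  calc _ = (x : Γ) * ((h : Γ) * z * (h : Γ)⁻¹) * (x : Γ)⁻¹ := by rw [hx, coe_mul]; group
    _ = x * z * (x : Γ)⁻¹ := by rw [conj_eq_of_mem_ambientCenter hh hz]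

variable (hGH : G ≤ normalizer (H : Set Γ)) [Fintype (G ⧸ H.subgroupOf G)]

noncomputable def ambientCenterNorm (z : H.ambientCenter) : H.ambientCenter :=
  ∏ q : G ⧸ H.subgroupOf G, ambientCenterConj (hGH q.out.2) z

theorem conj_ambientCenterNorm {g : Γ} (hg : g ∈ G) (z : H.ambientCenter) :
    g * ambientCenterNorm G hGH z * g⁻¹ = ambientCenterNorm G hGH z := by
  rw [← coe_ambientCenterConj (hGH hg), ambientCenterNorm, map_prod]
  congr 1
  -- `g` permutes `G ⧸ H` by left multiplication, and conjugating `z` by a representative of a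
  -- coset does not depend on the representative since `H` centralizes `z`.
  refine Fintype.prod_equiv (MulAction.toPerm (⟨g, hg⟩ : G)) _ _ fun q => Subtype.ext ?_
  obtain ⟨x, rfl⟩ := QuotientGroup.mk_surjective q
  simp only [coe_ambientCenterConj, MulAction.toPerm_apply, MulAction.Quotient.smul_coe,
    smul_eq_mul, out_conj_eq G z.2, coe_mul, _root_.mul_inv_rev, mul_assoc]

theorem ambientCenterNorm_mem_ambientCenter (hHG : H ≤ G) (z : H.ambientCenter) :
    (ambientCenterNorm G hGH z : Γ) ∈ G.ambientCenter :=
  mem_ambientCenter.2 ⟨hHG (ambientCenter_le (ambientCenterNorm G hGH z).2), fun _ hg =>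
    (mul_inv_eq_iff_eq_mul.1 (conj_ambientCenterNorm G hGH hg z)).symm⟩

theorem coe_ambientCenterNorm (z : H.ambientCenter) :
    (ambientCenterNorm G hGH z : Γ) = (Finset.univ.toList.map fun q : G ⧸ H.subgroupOf G =>
      (q.out : Γ) * z * (q.out : Γ)⁻¹).prod := by
  rw [ambientCenterNorm, ← Finset.prod_map_toList, ← H.ambientCenter.coe_subtype,
    map_list_prod, List.map_map]
  rfl

theorem apply_ambientCenterNorm {M : Type*} [CommGroup M] {μ : Γ → M}
    (hμ : ∀ g ∈ G, ∀ h ∈ G, μ (g * h) = μ g * μ h) (hHG : H ≤ G) (z : H.ambientCenter) :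
    μ (ambientCenterNorm G hGH z) = μ z ^ Fintype.card (G ⧸ H.subgroupOf G) := by
  let χ : G →* M := MonoidHom.mk' (fun g => μ g) fun a b => hμ a a.2 b b.2
  let ν : H.ambientCenter →* M := χ.comp (inclusion (ambientCenter_le.trans hHG))
  have hzG : (z : Γ) ∈ G := hHG (ambientCenter_le z.2)
  have hν (q : G) : ν (ambientCenterConj (hGH q.2) z) = ν z := by
    change χ (q * ⟨z, hzG⟩ * q⁻¹) = χ ⟨z, hzG⟩
    rw [map_mul, map_mul, map_inv, mul_inv_cancel_comm]
  change ν _ = ν z ^ _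
  simp only [ambientCenterNorm, map_prod, hν, Finset.prod_const, Finset.card_univ]

end Subgroup

end Norm

theorem MvPolynomial.aeval_pi_apply {R σ X : Type*} [CommSemiring R] (x : σ → X → R)
    (p : MvPolynomial σ R) (a : X) : aeval x p a = eval (fun i => x i a) p := by
  simpa using congrArg (· p) (comp_aeval x (Pi.evalAlgHom R (fun _ => R) a))

section AffineSpace

variable {k} {ι : Type} [Fintype ι]

attribute [local instance] zariskiTopology

namespace zariskiTopology

theorem isOpen_setOf_eval_ne_zero (p : MvPolynomial ι k) :
    IsOpen {x : ι → k | eval x p ≠ 0} :=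
  isOpen_generateFrom_of_mem ⟨p, rfl⟩

theorem exists_eval_ne_zero_subset {U : Set (ι → k)} (hU : IsOpen U) {x : ι → k} (hx : x ∈ U) :
    ∃ p : MvPolynomial ι k, eval x p ≠ 0 ∧ {y | eval y p ≠ 0} ⊆ U := by
  induction hU generalizing x with
  | basic U hU =>
    obtain ⟨p, rfl⟩ := hU
    exact ⟨p, hx, subset_rfl⟩
  | univ => exact ⟨1, by simp, subset_univ _⟩
  | inter U V _ _ ihU ihV =>
    obtain ⟨p, hpx, hpU⟩ := ihU hx.1
    obtain ⟨q, hqx, hqV⟩ := ihV hx.2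
    refine ⟨p * q, by simp [hpx, hqx], fun y hy => ?_⟩
    have hy : eval y p * eval y q ≠ 0 := by simpa using hy
    exact ⟨hpU (left_ne_zero_of_mul hy), hqV (right_ne_zero_of_mul hy)⟩
  | sUnion S _ ih =>
    obtain ⟨U, hUS, hxU⟩ := hx
    obtain ⟨p, hpx, hpU⟩ := ih U hUS hxU
    exact ⟨p, hpx, hpU.trans (subset_sUnion_of_mem hUS)⟩

theorem zeroLocus_vanishingIdeal {Z : Set (ι → k)} (hZ : IsClosed Z) :
    zeroLocus k (vanishingIdeal k Z) = Z := by
  refine (zeroLocus_vanishingIdeal_le Z).antisymm' fun x hx => ?_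
  by_contra hxZ
  obtain ⟨p, hpx, hpZ⟩ := exists_eval_ne_zero_subset hZ.isOpen_compl hxZ
  refine hpx (hx p (mem_vanishingIdeal_iff.2 fun y hy => ?_))
  by_contra hpy
  exact hpZ hpy hy

theorem noetherianSpace : NoetherianSpace (ι → k) := by
  refine StrictMono.wellFoundedGT
    (f := fun U : Opens (ι → k) => vanishingIdeal k ((U : Set (ι → k))ᶜ)) fun U V hUV => ?_
  refine (vanishingIdeal_anti_mono (compl_subset_compl.2 hUV.le)).lt_of_ne fun h => hUV.ne ?_
  have := congrArg (zeroLocus k) h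
  rw [zeroLocus_vanishingIdeal U.isOpen.isClosed_compl,
    zeroLocus_vanishingIdeal V.isOpen.isClosed_compl, compl_inj_iff] at this
  exact Opens.ext this

end zariskiTopology

end AffineSpace

section GeneralLinearGroup

variable {k} {n : ℕ}

variable (k) in
noncomputable def regularFunctions (n : ℕ) : Subalgebra k (GL (Fin n) k → k) :=
  (aeval fun j (g : GL (Fin n) k) => glEmbedding k n g j).range

theorem isOpen_setOf_ne_zero {F : GL (Fin n) k → k} (hF : F ∈ regularFunctions k n) :
    IsOpen {g | F g ≠ 0} := by
  let _ := zariskiTopology k ((Fin n × Fin n) ⊕ Unit)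
  obtain ⟨p, rfl⟩ := (AlgHom.mem_range _).1 hF
  simpa [aeval_pi_apply] using isOpen_induced (f := glEmbedding k n)
    (zariskiTopology.isOpen_setOf_eval_ne_zero p)

theorem isClosed_preimage_singleton {F : GL (Fin n) k → k} (hF : F ∈ regularFunctions k n)
    (a : k) : IsClosed (F ⁻¹' {a}) := by
  rw [← isOpen_compl_iff]
  convert isOpen_setOf_ne_zero (sub_mem hF ((regularFunctions k n).algebraMap_mem a)) using 1
  ext g
  simp [sub_eq_zero]

abbrev IsRegularMap (φ : GL (Fin n) k → GL (Fin n) k) : Prop :=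
  ∀ j, (fun g => glEmbedding k n (φ g) j) ∈ regularFunctions k n

theorem IsRegularMap.comp_mem {φ : GL (Fin n) k → GL (Fin n) k} (hφ : IsRegularMap φ)
    {F : GL (Fin n) k → k} (hF : F ∈ regularFunctions k n) : F ∘ φ ∈ regularFunctions k n := by
  obtain ⟨p, rfl⟩ := (AlgHom.mem_range _).1 hF
  have : (aeval fun j (g : GL (Fin n) k) => glEmbedding k n g j) p ∘ φ =
      aeval (fun j g => glEmbedding k n (φ g) j) p := by
    ext g
    simp [aeval_pi_apply]
  rw [this]
  refine Algebra.adjoin_le (range_subset_iff.2 hφ) ?_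
  rw [← aeval_range]
  exact AlgHom.mem_range_self _ p

theorem IsRegularMap.continuous {φ : GL (Fin n) k → GL (Fin n) k} (hφ : IsRegularMap φ) :
    Continuous φ := by
  let _ := zariskiTopology k ((Fin n × Fin n) ⊕ Unit)
  refine continuous_induced_rng.2 (continuous_generateFrom_iff.2 ?_)
  rintro _ ⟨p, rfl⟩
  simpa [aeval_pi_apply] using isOpen_setOf_ne_zero (hφ.comp_mem (AlgHom.mem_range_self _ p))

theorem isRegularMap_const (c : GL (Fin n) k) : IsRegularMap fun _ => c :=
  fun j => (regularFunctions k n).algebraMap_mem (glEmbedding k n c j)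

theorem isRegularMap_id : IsRegularMap fun g : GL (Fin n) k => g :=
  fun j => ⟨X j, aeval_X _ j⟩

theorem IsRegularMap.mul {φ ψ : GL (Fin n) k → GL (Fin n) k} (hφ : IsRegularMap φ)
    (hψ : IsRegularMap ψ) : IsRegularMap fun g => φ g * ψ g := by
  rintro (⟨i, j⟩ | ⟨⟩)
  · have : (fun g => glEmbedding k n (φ g * ψ g) (.inl (i, j))) =
        ∑ l, (fun g => glEmbedding k n (φ g) (.inl (i, l))) *
          fun g => glEmbedding k n (ψ g) (.inl (l, j)) := by
      ext g
      simp [glEmbedding, Matrix.mul_apply]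
    rw [this]
    exact sum_mem fun l _ => mul_mem (hφ _) (hψ _)
  · have : (fun g => glEmbedding k n (φ g * ψ g) (.inr ())) =
        (fun g => glEmbedding k n (ψ g) (.inr ())) * fun g => glEmbedding k n (φ g) (.inr ()) := by
      ext g
      simp [glEmbedding]
    rw [this]
    exact mul_mem (hψ _) (hφ _)

theorem isRegularMap_list_prod {ι : Type*} (l : List ι) {φ : ι → GL (Fin n) k → GL (Fin n) k}
    (hφ : ∀ i ∈ l, IsRegularMap (φ i)) : IsRegularMap fun g => (l.map fun i => φ i g).prod := by
  induction l with
  | nil => simpa using isRegularMap_const 1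
  | cons i l ih =>
    simpa using (hφ i List.mem_cons_self).mul (ih fun j hj => hφ j (List.mem_cons_of_mem i hj))

instance : SeparatelyContinuousMul (GL (Fin n) k) where
  continuous_const_mul := ((isRegularMap_const _).mul isRegularMap_id).continuous
  continuous_mul_const := (isRegularMap_id.mul (isRegularMap_const _)).continuous

instance : NoetherianSpace (GL (Fin n) k) :=
  letI := zariskiTopology k ((Fin n × Fin n) ⊕ Unit)
  have := zariskiTopology.noetherianSpace (k := k) (ι := (Fin n × Fin n) ⊕ Unit)
  Topology.IsInducing.noetherianSpace ⟨rfl⟩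

theorem IsAlgebraicCharacter.exists_regular_extension {G : Subgroup (GL (Fin n) k)}
    {μ : GL (Fin n) k → kˣ} (hμ : IsAlgebraicCharacter k G μ) :
    ∃ F ∈ regularFunctions k n, ∀ g ∈ G, F g = μ g := by
  obtain ⟨-, f, m, hf⟩ := hμ
  refine ⟨_, AlgHom.mem_range_self _ (rename Sum.inl f * X (.inr ()) ^ m), fun g hg => ?_⟩
  have hdet : (g : Matrix (Fin n) (Fin n) k).det ≠ 0 :=
    ((isUnit_iff_isUnit_det _).1 g.isUnit).ne_zero
  simp only [aeval_pi_apply, map_mul, map_pow, eval_rename, eval_X]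
  rw [show glEmbedding k n g ∘ Sum.inl = fun q => (g : Matrix (Fin n) (Fin n) k) q.1 q.2 from rfl,
    ← hf g hg, mul_assoc, ← mul_pow]
  simp [glEmbedding, hdet]

theorem idComponent_eq_connectedComponentIn (s : Set (GL (Fin n) k)) :
    idComponent k s = connectedComponentIn s 1 := by
  ext g
  by_cases h1 : 1 ∈ s
  · simp [idComponent, connectedComponentIn_eq_image h1, h1]
  · simp [idComponent, connectedComponentIn_eq_empty h1, h1]

theorem centerOf_eq_ambientCenter (H : Subgroup (GL (Fin n) k)) :
    centerOf k (H : Set (GL (Fin n) k)) = H.ambientCenter :=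
  Set.ext fun _ => Subgroup.mem_ambientCenter.symm

theorem exists_pow_eq_on_connectedComponentIn_ambientCenter (G : Subgroup (GL (Fin n) k))
    {M : Type*} [CommGroup M] {μ : GL (Fin n) k → M}
    (hμ : ∀ g ∈ G, ∀ h ∈ G, μ (g * h) = μ g * μ h) :
    ∃ N > 0, ∀ z ∈ connectedComponentIn (G.identityComponent.ambientCenter : Set _) 1,
      ∃ w ∈ connectedComponentIn (G.ambientCenter : Set _) 1, μ w = μ z ^ N := by
  classical
  set H := G.identityComponent
  have hHG : H ≤ G := G.identityComponent_le
  have hGH := G.le_normalizer_identityComponent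
  let _ := Fintype.ofFinite (G ⧸ H.subgroupOf G)
  -- The norm, extended to a polynomial map on all of `GL_n`: this is what makes it continuous.
  let P : GL (Fin n) k → GL (Fin n) k := fun z => (Finset.univ.toList.map
    fun q : G ⧸ H.subgroupOf G => (q.out : GL (Fin n) k) * z * q.out⁻¹).prod
  have hP : Continuous P := (isRegularMap_list_prod _ fun q _ =>
    ((isRegularMap_const _).mul isRegularMap_id).mul (isRegularMap_const _)).continuous
  have hPN (z : H.ambientCenter) : P z = Subgroup.ambientCenterNorm G hGH z :=
    (Subgroup.coe_ambientCenterNorm G hGH z).symm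
  have hPK : P '' H.ambientCenter ⊆ G.ambientCenter := by
    rintro _ ⟨z, hz, rfl⟩
    rw [hPN ⟨z, hz⟩]
    exact Subgroup.ambientCenterNorm_mem_ambientCenter G hGH hHG _
  have hP1 : P 1 = 1 := by simp [P]
  refine ⟨Fintype.card (G ⧸ H.subgroupOf G), Fintype.card_pos, fun z hz => ⟨P z, ?_, ?_⟩⟩
  · have := hP.continuousOn.mapsTo_connectedComponentIn (one_mem _) hz
    rw [hP1] at this
    exact connectedComponentIn_mono _ hPK this
  · have hzK := connectedComponentIn_subset _ _ hz
    rw [hPN ⟨z, hzK⟩]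
    exact Subgroup.apply_ambientCenterNorm G hGH hμ hHG _

end GeneralLinearGroup

theorem character_nontrivial_on_connected_center
    (n : ℕ)
    (G : Subgroup (GL (Fin n) k))
    (μ : GL (Fin n) k → kˣ) (hμ : IsAlgebraicCharacter k G μ)
    (hnontriv : ∃ z ∈ idComponent k
        (centerOf k (idComponent k (G : Set (GL (Fin n) k)))), μ z ≠ 1) :
    ∃ z ∈ idComponent k (centerOf k (G : Set (GL (Fin n) k))), μ z ≠ 1 := by
  obtain ⟨F, hF, hFμ⟩ := hμ.exists_regular_extension
  obtain ⟨N, hN, hnorm⟩ := exists_pow_eq_on_connectedComponentIn_ambientCenter G hμ.1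
  simp only [idComponent_eq_connectedComponentIn, ← G.coe_identityComponent,
    centerOf_eq_ambientCenter] at hnontriv ⊢
  by_contra! htriv
  obtain ⟨z₀, hz₀, hμz₀⟩ := hnontriv
  set C := connectedComponentIn (G.identityComponent.ambientCenter : Set (GL (Fin n) k)) 1
  have hCG : C ⊆ G := (connectedComponentIn_subset _ _).trans
    (SetLike.coe_subset_coe.2 (Subgroup.ambientCenter_le.trans G.identityComponent_le))
  have hroots : F '' C ⊆ Polynomial.nthRootsFinset N (1 : k) := by
    rintro _ ⟨z, hz, rfl⟩
    obtain ⟨w, hw, hwz⟩ := hnorm z hz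
    rw [Finset.mem_coe, Polynomial.mem_nthRootsFinset hN, hFμ z (hCG hz),
      ← Units.val_pow_eq_pow_val, ← hwz, htriv w hw, Units.val_one]
  have hμ1 : μ 1 = 1 := by simpa using hμ.1 1 G.one_mem 1 G.one_mem
  have := isPreconnected_connectedComponentIn.apply_eq_of_isClosed_fiber
    ((Finset.finite_toSet _).subset hroots) (isClosed_preimage_singleton hF)
    (mem_connectedComponentIn (one_mem _)) hz₀
  rw [hFμ _ (hCG hz₀), hFμ _ G.one_mem, hμ1] at this
  exact hμz₀ (Units.ext this)
end

section
/- Let $Y$ be a compact Hausdorff topological space, $U \subseteq Y$ an open subset, and $k$ a field. Define the interior cohomology $H^i_{\mathrm{Int}}(U, k)$ as the image of the natural map $H^i_c(U,k) \to H^i(U,k)$ from compactly supported sheaf cohomology to sheaf cohomology. Then $H^i_{\mathrm{Int}}(U,k)$ is naturally a subquotient of $H^i(Y,k)$: setting $A = \mathrm{Im}(H^i_c(U,k) \to H^i_c(Y,k) = H^i(Y,k))$ and $B = \mathrm{Im}(\ker(H^i_c(U,k) \to H^i(U,k)) \to H^i(Y,k))$, one has $B \subseteq A \subseteq H^i(Y,k)$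 and $A/B \cong H^i_{\mathrm{Int}}(U,k)$. -/
/-- **Interior cohomology is a subquotient.**  Let `Y` be a compact Hausdorff space,
`U ⊆ Y` open, and `k` a field.  Given the compactly supported cohomology `HcU` of `U`,
the cohomology `HU` of `U` and the cohomology `HY` of `Y` (in a fixed degree `i`),
with the natural map `α : HcU → HU`, the extension-by-zero map `ext : HcU → HY`
(using `H^i_c(Y) = H^i(Y)`) and the restriction `res : HY → HU` satisfying
`res ∘ ext = α`; then setting `A = Im(ext)` and `B = ext(ker α)`, one has `B ⊆ A`
and `A/B ≅ H^i_Int(U, k) := Im(α)`. -/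
theorem interior_cohomology_subquotient
    (Y : Type) [TopologicalSpace Y] [CompactSpace Y] [T2Space Y]
    (U : Set Y) (hU : IsOpen U)
    (k : Type) [Field k]
    (HcU HU HY : Type)
    [AddCommGroup HcU] [Module k HcU]
    [AddCommGroup HU] [Module k HU]
    [AddCommGroup HY] [Module k HY]
    (α : HcU →ₗ[k] HU)
    (ext : HcU →ₗ[k] HY)
    (res : HY →ₗ[k] HU)
    (hcomm : res ∘ₗ ext = α) :
    (LinearMap.ker α).map ext ≤ LinearMap.range ext ∧
      Nonempty
        ((↥(LinearMap.range ext) ⧸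
            ((LinearMap.ker α).map ext).comap (LinearMap.range ext).subtype)
          ≃ₗ[k] ↥(LinearMap.range α)) := by
  constructor
  · rintro y ⟨x, -, rfl⟩
    exact ⟨x, rfl⟩
  · -- define f : range ext → range α, a ↦ res a
    have hmem : ∀ a : LinearMap.range ext,
        res (a : HY) ∈ LinearMap.range α := by
      rintro ⟨a, x, rfl⟩
      exact ⟨x, by rw [← hcomm]; rfl⟩
    let f : ↥(LinearMap.range ext) →ₗ[k] ↥(LinearMap.range α) :=
      LinearMap.codRestrict _ (res ∘ₗ (LinearMap.range ext).subtype) hmem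
    have hsurj : Function.Surjective f := by
      rintro ⟨u, x, rfl⟩
      refine ⟨⟨ext x, ⟨x, rfl⟩⟩, ?_⟩
      apply Subtype.ext
      show res (ext x) = α x
      rw [← hcomm]; rfl
    have hker : LinearMap.ker f =
        ((LinearMap.ker α).map ext).comap (LinearMap.range ext).subtype := by
      ext ⟨a, x, rfl⟩
      constructor
      · intro h
        have h' : res (ext x) = 0 := congrArg Subtype.val h
        refine ⟨x, ?_, rfl⟩
        show α x = 0
        rw [← hcomm]; exact h'
      · rintro ⟨x', hx', hx'e⟩
        apply Subtype.ext
        show res (ext x) = 0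
        have : ext x' = ext x := hx'e
        rw [← this, ← LinearMap.comp_apply, hcomm]
        exact hx'
    exact ⟨(Submodule.quotEquivOfEq _ _ hker.symm).trans
      (f.quotKerEquivOfSurjective hsurj)⟩
end
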